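/- arXiv:2604.02380 — 4 statements merged into one kernel-verified Lean document; each statement's English description precedes it below -/
import Mathlib

section
/- Let γ₁ : [0,L₁] → ℝ^d and γ₂ : [0,L₂] → ℝ^d be consecutive unit-speed curves whose derivatives γ₁' and γ₂' are Lipschitz continuous and which satisfy Assumption 1. Then V(γ₁,γ₂) = o(V(γ₁,γ₁) + V(γ₂,γ₂)) as σ_x, σ_t → 0 with σ_x ≍ σ_t; that is, for all k₁, k₂ > 0 and all ε > 0 there exists δ > 0 such that for every σ_x ∈ (0,δ) and every σ_t with k₁σ_x ≤ σ_t ≤ k₂σ_x one has V(γ₁,γ₂) ≤ ε · (V(γ₁,γ₁) + V(γ₂,γ₂)). -/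
open Set MeasureTheory

/-- The Gaussian varifold inner product of two (parameterized) curves
`f, g : ℝ → ℝ^d` with respective derivatives `f', g'`, over parameter
intervals `[0, L₁]` and `[0, L₂]`, with spatial scale `σx` and tangential scale `σt`. -/
noncomputable def vprod (d : ℕ) (σx σt L₁ L₂ : ℝ)
    (f f' g g' : ℝ → EuclideanSpace ℝ (Fin d)) : ℝ :=
  ∫ s in (0:ℝ)..L₁, ∫ t in (0:ℝ)..L₂,
    Real.exp (-‖f s - g t‖ ^ 2 / σx ^ 2) * Real.exp (-‖f' s - g' t‖ ^ 2 / σt ^ 2)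

/-- A unit-speed curve in `ℝ^d`: a continuously differentiable map `γ : [0,L] → ℝ^d`
with `L > 0`, derivative `γ'`, and `‖γ'(s)‖ = 1` for all `s ∈ [0,L]`. -/
structure UnitSpeedCurve (d : ℕ) where
  L : ℝ
  γ : ℝ → EuclideanSpace ℝ (Fin d)
  γ' : ℝ → EuclideanSpace ℝ (Fin d)
  L_pos : 0 < L
  hasDeriv : ∀ s ∈ Set.Icc (0:ℝ) L, HasDerivWithinAt γ (γ' s) (Set.Icc 0 L) s
  contDeriv : ContinuousOn γ' (Set.Icc 0 L)
  unitSpeed : ∀ s ∈ Set.Icc (0:ℝ) L, ‖γ' s‖ = 1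

/-- The Gaussian varifold inner product `V(γ₁, γ₂)` of two unit-speed curves. -/
noncomputable def V {d : ℕ} (σx σt : ℝ) (c₁ c₂ : UnitSpeedCurve d) : ℝ :=
  vprod d σx σt c₁.L c₂.L c₁.γ c₁.γ' c₂.γ c₂.γ'

/-! ### Auxiliary lemmas -/

lemma gauss_half_le {σ : ℝ} (hσ : 0 < σ) {L : ℝ} (hL : 0 ≤ L) :
    ∫ u in (0:ℝ)..L, Real.exp (-(1/(4*σ^2)) * u^2) ≤ 2*σ := by
  have hb : 0 < 1/(4*σ^2) := by positivity
  have hint : IntegrableOn (fun u => Real.exp (-(1/(4*σ^2)) * u^2)) (Ioi 0) :=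
    (integrable_exp_neg_mul_sq hb).integrableOn
  rw [intervalIntegral.integral_of_le hL]
  have h1 : ∫ u in Set.Ioc (0:ℝ) L, Real.exp (-(1/(4*σ^2)) * u^2)
      ≤ ∫ u in Set.Ioi (0:ℝ), Real.exp (-(1/(4*σ^2)) * u^2) :=
    setIntegral_mono_set hint (Filter.Eventually.of_forall fun u => (Real.exp_pos _).le)
      Set.Ioc_subset_Ioi_self.eventuallyLE
  refine h1.trans ?_
  rw [integral_gaussian_Ioi]
  have h2 : Real.pi / (1/(4*σ^2)) = (2*σ)^2 * Real.pi := by field_simp; ring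
  have h3 : Real.sqrt (Real.pi / (1/(4*σ^2))) = (2*σ) * Real.sqrt Real.pi := by
    rw [h2, Real.sqrt_mul (sq_nonneg _), Real.sqrt_sq (by positivity)]
  have h4 : Real.sqrt Real.pi ≤ 2 := by
    have : Real.sqrt Real.pi ≤ Real.sqrt 4 := Real.sqrt_le_sqrt Real.pi_le_four
    calc Real.sqrt Real.pi ≤ Real.sqrt 4 := this
    _ = 2 := by rw [show (4:ℝ) = 2^2 by norm_num, Real.sqrt_sq (by norm_num)]
  rw [h3]
  nlinarith [Real.sqrt_nonneg Real.pi]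

lemma curve_cont {d : ℕ} (c : UnitSpeedCurve d) : ContinuousOn c.γ (Set.Icc 0 c.L) :=
  fun s hs => (c.hasDeriv s hs).continuousWithinAt

lemma curve_lip {d : ℕ} (c : UnitSpeedCurve d) {s t : ℝ}
    (hs : s ∈ Set.Icc (0:ℝ) c.L) (ht : t ∈ Set.Icc (0:ℝ) c.L) :
    ‖c.γ s - c.γ t‖ ≤ |s - t| := by
  have := (convex_Icc (0:ℝ) c.L).norm_image_sub_le_of_norm_hasDerivWithin_le
    c.hasDeriv (fun x hx => (c.unitSpeed x hx).le) ht hs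
  simpa [Real.norm_eq_abs] using this

lemma abs_sub_le_of_mem_uIcc {x₀ s u : ℝ} (hu : u ∈ Set.uIcc x₀ s) : |u - x₀| ≤ |s - x₀| := by
  rcases le_total x₀ s with h | h
  · rw [Set.uIcc_of_le h] at hu
    rw [abs_of_nonneg (by linarith [hu.1]), abs_of_nonneg (by linarith)]
    linarith [hu.2]
  · rw [Set.uIcc_of_ge h] at hu
    rw [abs_of_nonpos (by linarith [hu.2]), abs_of_nonpos (by linarith)]
    linarith [hu.1]

lemma taylor_est {d : ℕ} (c : UnitSpeedCurve d) {K : NNReal}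
    (hK : LipschitzOnWith K c.γ' (Set.Icc 0 c.L))
    {x₀ s : ℝ} (hx₀ : x₀ ∈ Set.Icc (0:ℝ) c.L) (hs : s ∈ Set.Icc (0:ℝ) c.L) :
    ‖c.γ s - c.γ x₀ - (s - x₀) • c.γ' x₀‖ ≤ K * |s - x₀| * |s - x₀| := by
  set S := Set.uIcc x₀ s with hS
  have hSsub : S ⊆ Set.Icc 0 c.L := Set.uIcc_subset_Icc hx₀ hs
  set h : ℝ → EuclideanSpace ℝ (Fin d) := fun u => c.γ u - (u - x₀) • c.γ' x₀ with hh
  have hderiv : ∀ u ∈ S, HasDerivWithinAt h (c.γ' u - c.γ' x₀) S u := by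
    intro u hu
    have h1 : HasDerivWithinAt (fun u : ℝ => (u - x₀) • c.γ' x₀) ((1:ℝ) • c.γ' x₀) S u :=
      ((hasDerivWithinAt_id u S).sub_const x₀).smul_const (c.γ' x₀)
    have h2 := ((c.hasDeriv u (hSsub hu)).mono hSsub).sub h1
    rw [one_smul] at h2
    exact h2
  have hbound : ∀ u ∈ S, ‖c.γ' u - c.γ' x₀‖ ≤ (K : ℝ) * |s - x₀| := by
    intro u hu
    have h1 := hK.dist_le_mul u (hSsub hu) x₀ (hSsub (Set.left_mem_uIcc))
    rw [dist_eq_norm] at h1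
    refine h1.trans ?_
    rw [Real.dist_eq]
    exact mul_le_mul_of_nonneg_left (abs_sub_le_of_mem_uIcc hu) K.coe_nonneg
  have := (convex_uIcc x₀ s).norm_image_sub_le_of_norm_hasDerivWithin_le hderiv hbound
    Set.left_mem_uIcc Set.right_mem_uIcc
  have hhx₀ : h x₀ = c.γ x₀ := by simp [hh]
  rw [hhx₀] at this
  have heq : h s - c.γ x₀ = c.γ s - c.γ x₀ - (s - x₀) • c.γ' x₀ := by
    simp [hh]; abel
  rw [heq] at this
  simpa [Real.norm_eq_abs, mul_comm] using this

lemma contF {d : ℕ} (c₁ c₂ : UnitSpeedCurve d) (σx σt : ℝ) :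
    ContinuousOn (fun p : ℝ × ℝ =>
        Real.exp (-‖c₁.γ p.1 - c₂.γ p.2‖ ^ 2 / σx ^ 2) *
          Real.exp (-‖c₁.γ' p.1 - c₂.γ' p.2‖ ^ 2 / σt ^ 2))
      ((Set.Icc 0 c₁.L) ×ˢ (Set.Icc 0 c₂.L)) := by
  have hfst : ∀ (f : ℝ → EuclideanSpace ℝ (Fin d)), ContinuousOn f (Set.Icc 0 c₁.L) →
      ContinuousOn (fun p : ℝ × ℝ => f p.1) ((Set.Icc 0 c₁.L) ×ˢ (Set.Icc 0 c₂.L)) :=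
    fun f hf => hf.comp continuous_fst.continuousOn (fun p hp => hp.1)
  have hsnd : ∀ (f : ℝ → EuclideanSpace ℝ (Fin d)), ContinuousOn f (Set.Icc 0 c₂.L) →
      ContinuousOn (fun p : ℝ × ℝ => f p.2) ((Set.Icc 0 c₁.L) ×ˢ (Set.Icc 0 c₂.L)) :=
    fun f hf => hf.comp continuous_snd.continuousOn (fun p hp => hp.2)
  apply ContinuousOn.mul
  · exact Real.continuous_exp.comp_continuousOn
      ((((hfst _ (curve_cont c₁)).sub (hsnd _ (curve_cont c₂))).norm.pow 2).neg.div_const _)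
  · exact Real.continuous_exp.comp_continuousOn
      ((((hfst _ c₁.contDeriv).sub (hsnd _ c₂.contDeriv)).norm.pow 2).neg.div_const _)

lemma innerInt {d : ℕ} (c₁ c₂ : UnitSpeedCurve d) (σx σt : ℝ) {s : ℝ} :
    IntervalIntegrable (fun t =>
        Real.exp (-‖c₁.γ s - c₂.γ t‖ ^ 2 / σx ^ 2) *
          Real.exp (-‖c₁.γ' s - c₂.γ' t‖ ^ 2 / σt ^ 2)) volume 0 c₂.L := by
  have hc : ContinuousOn (fun t =>
      Real.exp (-‖c₁.γ s - c₂.γ t‖ ^ 2 / σx ^ 2) *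
        Real.exp (-‖c₁.γ' s - c₂.γ' t‖ ^ 2 / σt ^ 2)) (Set.Icc 0 c₂.L) := by
    apply ContinuousOn.mul
    · exact Real.continuous_exp.comp_continuousOn
        ((((continuousOn_const.sub (curve_cont c₂)).norm.pow 2).neg).div_const _)
    · exact Real.continuous_exp.comp_continuousOn
        ((((continuousOn_const.sub c₂.contDeriv).norm.pow 2).neg).div_const _)
  exact ContinuousOn.intervalIntegrable_of_Icc c₂.L_pos.le hc

lemma gInt {d : ℕ} (c₁ c₂ : UnitSpeedCurve d) (σx σt : ℝ) :
    IntervalIntegrable (fun s => ∫ t in (0:ℝ)..c₂.L,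
        Real.exp (-‖c₁.γ s - c₂.γ t‖ ^ 2 / σx ^ 2) *
          Real.exp (-‖c₁.γ' s - c₂.γ' t‖ ^ 2 / σt ^ 2)) volume 0 c₁.L := by
  set F : ℝ × ℝ → ℝ := fun p =>
    Real.exp (-‖c₁.γ p.1 - c₂.γ p.2‖ ^ 2 / σx ^ 2) *
      Real.exp (-‖c₁.γ' p.1 - c₂.γ' p.2‖ ^ 2 / σt ^ 2) with hF
  have hcomp : IsCompact ((Set.Icc (0:ℝ) c₁.L) ×ˢ (Set.Icc (0:ℝ) c₂.L)) :=
    isCompact_Icc.prod isCompact_Icc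
  have hint : IntegrableOn F ((Set.Icc (0:ℝ) c₁.L) ×ˢ (Set.Icc (0:ℝ) c₂.L)) :=
    (contF c₁ c₂ σx σt).integrableOn_compact hcomp
  have hint2 : Integrable F
      ((volume.restrict (Set.Ioc (0:ℝ) c₁.L)).prod (volume.restrict (Set.Ioc (0:ℝ) c₂.L))) := by
    rw [Measure.prod_restrict]
    exact hint.mono_set (Set.prod_mono Set.Ioc_subset_Icc_self Set.Ioc_subset_Icc_self)
  have h3 := hint2.integral_prod_left
  rw [intervalIntegrable_iff_integrableOn_Ioc_of_le c₁.L_pos.le]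
  simp only [intervalIntegral.integral_of_le c₂.L_pos.le]; exact h3

lemma junction_lower {d : ℕ} (c₁ c₂ : UnitSpeedCurve d) {K₁ K₂ : NNReal}
    (hK₁ : LipschitzOnWith K₁ c₁.γ' (Set.Icc 0 c₁.L))
    (hK₂ : LipschitzOnWith K₂ c₂.γ' (Set.Icc 0 c₂.L))
    (hpt : c₁.γ c₁.L = c₂.γ 0) (hdir : c₁.γ' c₁.L = c₂.γ' 0)
    {K r : ℝ} (hK₁K : (K₁:ℝ) ≤ K) (hK₂K : (K₂:ℝ) ≤ K) (hrK : K * r ≤ 1/2)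
    {s t : ℝ} (hs : s ∈ Set.Icc (0:ℝ) c₁.L) (ht : t ∈ Set.Icc (0:ℝ) c₂.L)
    (hsr : c₁.L - s ≤ r) (htr : t ≤ r) :
    ((c₁.L - s) + t) / 2 ≤ ‖c₁.γ s - c₂.γ t‖ := by
  have hL₁mem : c₁.L ∈ Set.Icc (0:ℝ) c₁.L := ⟨c₁.L_pos.le, le_refl _⟩
  have h0mem : (0:ℝ) ∈ Set.Icc (0:ℝ) c₂.L := ⟨le_refl _, c₂.L_pos.le⟩
  set v := c₁.γ' c₁.L with hv
  have hvnorm : ‖v‖ = 1 := c₁.unitSpeed c₁.L hL₁mem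
  set E₁ := c₁.γ s - c₁.γ c₁.L - (s - c₁.L) • v with hE₁
  set E₂ := c₂.γ t - c₂.γ 0 - t • v with hE₂
  have habs₁ : |s - c₁.L| = c₁.L - s := by rw [abs_of_nonpos (by linarith [hs.2])]; ring
  have e1 : ‖E₁‖ ≤ K₁ * (c₁.L - s) * (c₁.L - s) := by
    have := taylor_est c₁ hK₁ hL₁mem hs
    rwa [habs₁] at this
  have e2 : ‖E₂‖ ≤ K₂ * t * t := by
    have := taylor_est c₂ hK₂ h0mem ht
    simp only [sub_zero, ← hdir] at this
    rwa [abs_of_nonneg ht.1] at this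
  have hdecomp : c₁.γ s - c₂.γ t = (s - c₁.L - t) • v + E₁ - E₂ := by
    rw [hE₁, hE₂, ← hpt]
    module
  have htri : ‖(s - c₁.L - t) • v‖ ≤ ‖c₁.γ s - c₂.γ t‖ + ‖E₁‖ + ‖E₂‖ := by
    have h1 : (s - c₁.L - t) • v = (c₁.γ s - c₂.γ t - E₁) + E₂ := by
      rw [hdecomp]; abel
    calc ‖(s - c₁.L - t) • v‖ = ‖(c₁.γ s - c₂.γ t - E₁) + E₂‖ := by rw [h1]
      _ ≤ ‖c₁.γ s - c₂.γ t - E₁‖ + ‖E₂‖ := norm_add_le _ _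
      _ ≤ (‖c₁.γ s - c₂.γ t‖ + ‖E₁‖) + ‖E₂‖ := by
          gcongr
          exact norm_sub_le _ _
  have hnorm : ‖(s - c₁.L - t) • v‖ = (c₁.L - s) + t := by
    rw [norm_smul, hvnorm, mul_one, Real.norm_eq_abs, abs_of_nonpos (by linarith [hs.2, ht.1])]
    ring
  rw [hnorm] at htri
  have hK0 : 0 ≤ K := le_trans K₁.coe_nonneg hK₁K
  have hsub : 0 ≤ c₁.L - s := sub_nonneg.2 hs.2
  have hb₁ : ‖E₁‖ ≤ K * r * (c₁.L - s) :=
    le_trans e1 (mul_le_mul_of_nonneg_right (mul_le_mul hK₁K hsr hsub hK0) hsub)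
  have hb₂ : ‖E₂‖ ≤ K * r * t :=
    le_trans e2 (mul_le_mul_of_nonneg_right (mul_le_mul hK₂K htr ht.1 hK0) ht.1)
  nlinarith [sub_nonneg.2 hs.2, ht.1, norm_nonneg (c₁.γ s - c₂.γ t)]

/-! ### Main theorem -/

set_option maxHeartbeats 2000000 in
/-- **Lemma 1 (consecutive curves).** If `γ₁, γ₂` are consecutive unit-speed curves with
Lipschitz derivatives satisfying Assumption 1, then
`V(γ₁,γ₂) = o(V(γ₁,γ₁) + V(γ₂,γ₂))` as `σx, σt → 0` with `σx ≍ σt`. -/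
theorem consecutive_cross_term_negligible {d : ℕ} (c₁ c₂ : UnitSpeedCurve d)
    (hlip₁ : ∃ K : NNReal, LipschitzOnWith K c₁.γ' (Set.Icc 0 c₁.L))
    (hlip₂ : ∃ K : NNReal, LipschitzOnWith K c₂.γ' (Set.Icc 0 c₂.L))
    (hconsec_pt : c₁.γ c₁.L = c₂.γ 0)
    (hconsec_dir : c₁.γ' c₁.L = c₂.γ' 0)
    (hA1 : ∀ s ∈ Set.Icc (0:ℝ) c₁.L, ∀ s' ∈ Set.Icc (0:ℝ) c₁.L,
      ∀ t ∈ Set.Icc (0:ℝ) c₂.L, ∀ t' ∈ Set.Icc (0:ℝ) c₂.L,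
      (c₁.L - s) + t ≤ (c₁.L - s') + t' → ‖c₁.γ s - c₂.γ t‖ ≤ ‖c₁.γ s' - c₂.γ t'‖) :
    ∀ k₁ > (0:ℝ), ∀ k₂ > (0:ℝ), ∀ ε > (0:ℝ), ∃ δ > (0:ℝ),
      ∀ σx : ℝ, 0 < σx → σx < δ → ∀ σt : ℝ, k₁ * σx ≤ σt → σt ≤ k₂ * σx →
        V σx σt c₁ c₂ ≤ ε * (V σx σt c₁ c₁ + V σx σt c₂ c₂) := by
  obtain ⟨K₁, hK₁⟩ := hlip₁
  obtain ⟨K₂, hK₂⟩ := hlip₂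
  intro k₁ hk₁ k₂ hk₂ ε hε
  have hL₁ : 0 < c₁.L := c₁.L_pos
  have hL₂ : 0 < c₂.L := c₂.L_pos
  set K : ℝ := max (max (K₁:ℝ) (K₂:ℝ)) 1 with hKdef
  have hK1 : (1:ℝ) ≤ K := le_max_right _ _
  have hK0 : (0:ℝ) < K := lt_of_lt_of_le one_pos hK1
  have hK₁K : (K₁:ℝ) ≤ K := le_trans (le_max_left _ _) (le_max_left _ _)
  have hK₂K : (K₂:ℝ) ≤ K := le_trans (le_max_right _ _) (le_max_left _ _)
  set r : ℝ := min (min (1/(2*K)) c₁.L) c₂.L with hrdef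
  have hr0 : 0 < r := lt_min (lt_min (by positivity) hL₁) hL₂
  have hrK : K * r ≤ 1/2 := by
    have h1 : r ≤ 1/(2*K) := le_trans (min_le_left _ _) (min_le_left _ _)
    calc K * r ≤ K * (1/(2*K)) := by
          exact mul_le_mul_of_nonneg_left h1 hK0.le
    _ = 1/2 := by field_simp
  have hrL₁ : r ≤ c₁.L := le_trans (min_le_left _ _) (min_le_right _ _)
  have hrL₂ : r ≤ c₂.L := min_le_right _ _
  set m : ℝ := Real.exp (-1) * Real.exp (-(K^2 / k₁^2)) with hm
  have hm0 : 0 < m := by positivity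
  set C : ℝ := 4 + 4 * c₁.L * c₂.L / r^2 with hC
  have hC0 : 0 < C := by positivity
  set cst : ℝ := c₁.L * m / 2 with hcst
  have hcst0 : 0 < cst := by positivity
  refine ⟨min c₁.L (ε * cst / C), lt_min hL₁ (by positivity), ?_⟩
  intro σx hσx hσxδ σt hσt1 hσt2
  have hσxL₁ : σx ≤ c₁.L := (lt_of_lt_of_le hσxδ (min_le_left _ _)).le
  have hσxC : σx ≤ ε * cst / C := (lt_of_lt_of_le hσxδ (min_le_right _ _)).le
  have hσt0 : 0 < σt := lt_of_lt_of_le (by positivity) hσt1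
  -- the four integrands
  set F₁₂ : ℝ → ℝ → ℝ := fun s t =>
    Real.exp (-‖c₁.γ s - c₂.γ t‖ ^ 2 / σx ^ 2) *
      Real.exp (-‖c₁.γ' s - c₂.γ' t‖ ^ 2 / σt ^ 2) with hF₁₂
  set F₁₁ : ℝ → ℝ → ℝ := fun s t =>
    Real.exp (-‖c₁.γ s - c₁.γ t‖ ^ 2 / σx ^ 2) *
      Real.exp (-‖c₁.γ' s - c₁.γ' t‖ ^ 2 / σt ^ 2) with hF₁₁
  -- ### Step 0: nonnegativity of V₂₂
  have hV22 : 0 ≤ V σx σt c₂ c₂ := by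
    unfold V vprod
    apply intervalIntegral.integral_nonneg hL₂.le
    intro s _
    apply intervalIntegral.integral_nonneg hL₂.le
    intro t _
    positivity
  -- ### Step 1: diagonal lower bound  cst * σx ≤ V₁₁
  have hdiag : cst * σx ≤ V σx σt c₁ c₁ := by
    have hptwise : ∀ s ∈ Set.Icc (0:ℝ) c₁.L,
        σx/2 * m ≤ ∫ t in (0:ℝ)..c₁.L, F₁₁ s t := by
      intro s hs
      obtain ⟨a, ha0, hbL', habs⟩ : ∃ a : ℝ, 0 ≤ a ∧ a + σx/2 ≤ c₁.L ∧
          ∀ t ∈ Set.Icc a (a + σx/2), |s - t| ≤ σx := by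
        rcases le_total s (c₁.L/2) with h | h
        · refine ⟨s, hs.1, by linarith, fun t ht => ?_⟩
          rw [abs_of_nonpos (by linarith [ht.1])]; linarith [ht.2]
        · refine ⟨s - σx/2, by linarith, by linarith [hs.2], fun t ht => ?_⟩
          rw [abs_of_nonneg (by linarith [ht.2])]; linarith [ht.1]
      set b : ℝ := a + σx/2 with hb
      have hbL : b ≤ c₁.L := hbL'
      have hab : a ≤ b := by rw [hb]; linarith
      have key : ∀ t ∈ Set.Icc a b, m ≤ F₁₁ s t := by
        intro t ht'
        have htmem : t ∈ Set.Icc (0:ℝ) c₁.L :=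
          ⟨le_trans ha0 ht'.1, le_trans ht'.2 hbL⟩
        have hdist : ‖c₁.γ s - c₁.γ t‖ ≤ σx :=
          le_trans (curve_lip c₁ hs htmem) (habs t ht')
        have hdist' : ‖c₁.γ' s - c₁.γ' t‖ ≤ K * σx := by
          have h1 := hK₁.dist_le_mul s hs t htmem
          rw [dist_eq_norm, Real.dist_eq] at h1
          exact le_trans h1 (mul_le_mul hK₁K (habs t ht') (abs_nonneg _) hK0.le)
        rw [hF₁₁]
        have he1 : Real.exp (-1 : ℝ) ≤ Real.exp (-‖c₁.γ s - c₁.γ t‖ ^ 2 / σx ^ 2) := by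
          apply Real.exp_le_exp.2
          rw [neg_div]
          rw [neg_le_neg_iff]
          rw [div_le_one (by positivity)]
          nlinarith [norm_nonneg (c₁.γ s - c₁.γ t)]
        have he2 : Real.exp (-(K^2 / k₁^2)) ≤
            Real.exp (-‖c₁.γ' s - c₁.γ' t‖ ^ 2 / σt ^ 2) := by
          apply Real.exp_le_exp.2
          rw [neg_div, neg_le_neg_iff]
          have hden : k₁^2 * σx^2 ≤ σt^2 := by nlinarith [mul_le_mul hσt1 hσt1 (by positivity : (0:ℝ) ≤ k₁ * σx) hσt0.le]
          have hnum : ‖c₁.γ' s - c₁.γ' t‖^2 ≤ K^2 * σx^2 := by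
            nlinarith [norm_nonneg (c₁.γ' s - c₁.γ' t)]
          calc ‖c₁.γ' s - c₁.γ' t‖ ^ 2 / σt ^ 2 ≤ (K^2 * σx^2) / (k₁^2 * σx^2) := by
                apply div_le_div₀ (by positivity) hnum (by positivity) hden
          _ = K^2 / k₁^2 := by
                rw [mul_div_mul_right _ _ (by positivity : σx^2 ≠ 0)]
        rw [hm]
        exact mul_le_mul he1 he2 (Real.exp_pos _).le (Real.exp_pos _).le
      have hint0L : IntervalIntegrable (fun t => F₁₁ s t) volume 0 c₁.L :=
        innerInt c₁ c₁ σx σt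
      have hintab : IntervalIntegrable (fun t => F₁₁ s t) volume a b := by
        apply hint0L.mono_set
        rw [Set.uIcc_of_le hab, Set.uIcc_of_le hL₁.le]
        exact Set.Icc_subset_Icc ha0 hbL
      calc σx/2 * m = ∫ _ in a..b, m := by
            rw [intervalIntegral.integral_const, smul_eq_mul, hb]; ring
      _ ≤ ∫ t in a..b, F₁₁ s t :=
            intervalIntegral.integral_mono_on hab intervalIntegrable_const hintab key
      _ ≤ ∫ t in (0:ℝ)..c₁.L, F₁₁ s t := by
            apply intervalIntegral.integral_mono_interval ha0 hab hbL
            · exact Filter.Eventually.of_forall fun t => by positivity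
            · exact hint0L
    unfold V vprod
    calc cst * σx = ∫ _ in (0:ℝ)..c₁.L, σx/2 * m := by
          rw [intervalIntegral.integral_const, smul_eq_mul, hcst]; ring
    _ ≤ ∫ s in (0:ℝ)..c₁.L, ∫ t in (0:ℝ)..c₁.L, F₁₁ s t :=
          intervalIntegral.integral_mono_on hL₁.le intervalIntegrable_const
            (gInt c₁ c₁ σx σt) hptwise
  -- ### Step 2: cross term upper bound  V₁₂ ≤ C * σx²
  have hcross : V σx σt c₁ c₂ ≤ C * σx^2 := by
    set G : ℝ → ℝ := fun u => Real.exp (-(1/(4*σx^2)) * u^2) with hG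
    have hGcont : Continuous G := by
      apply Real.continuous_exp.comp
      exact (continuous_const.mul (continuous_pow 2))
    have hGnonneg : ∀ u, 0 ≤ G u := fun u => (Real.exp_pos _).le
    set q : ℝ := 4*σx^2/r^2 with hq
    have hq0 : 0 ≤ q := by positivity
    -- pointwise bound
    have hpt : ∀ s ∈ Set.Icc (0:ℝ) c₁.L, ∀ t ∈ Set.Icc (0:ℝ) c₂.L,
        F₁₂ s t ≤ G (c₁.L - s) * G t + q := by
      intro s hs t ht
      have hstep1 : F₁₂ s t ≤ Real.exp (-‖c₁.γ s - c₂.γ t‖ ^ 2 / σx ^ 2) := by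
        rw [hF₁₂]
        apply mul_le_of_le_one_right (Real.exp_pos _).le
        apply Real.exp_le_one_iff.2
        rw [neg_div]
        simp only [neg_nonpos]
        positivity
      have hjun : min ((c₁.L - s) + t) r / 2 ≤ ‖c₁.γ s - c₂.γ t‖ := by
        rcases le_total ((c₁.L - s) + t) r with hcase | hcase
        · rw [min_eq_left hcase]
          exact junction_lower c₁ c₂ hK₁ hK₂ hconsec_pt hconsec_dir hK₁K hK₂K hrK hs ht
            (by linarith [ht.1]) (by linarith [hs.2])
        · rw [min_eq_right hcase]
          have hs' : c₁.L - r/2 ∈ Set.Icc (0:ℝ) c₁.L := ⟨by linarith, by linarith⟩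
          have ht' : r/2 ∈ Set.Icc (0:ℝ) c₂.L := ⟨by linarith, by linarith⟩
          have h1 : ((c₁.L - (c₁.L - r/2)) + r/2) / 2 ≤ ‖c₁.γ (c₁.L - r/2) - c₂.γ (r/2)‖ :=
            junction_lower c₁ c₂ hK₁ hK₂ hconsec_pt hconsec_dir hK₁K hK₂K hrK hs' ht'
              (by linarith) (by linarith)
          have h2 : ‖c₁.γ (c₁.L - r/2) - c₂.γ (r/2)‖ ≤ ‖c₁.γ s - c₂.γ t‖ :=
            hA1 _ hs' s hs _ ht' t ht (by linarith)
          calc r / 2 = ((c₁.L - (c₁.L - r/2)) + r/2) / 2 := by ring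
          _ ≤ _ := le_trans h1 h2
      set D := ‖c₁.γ s - c₂.γ t‖ with hD
      have hD0 : 0 ≤ D := norm_nonneg _
      rcases le_total ((c₁.L - s) + t) r with hcase | hcase
      · -- near junction: Gaussian product bound
        rw [min_eq_left hcase] at hjun
        have hA0 : 0 ≤ (c₁.L - s) + t := by
          have := hs.2; have := ht.1; linarith
        have h3 : Real.exp (-D ^ 2 / σx ^ 2) ≤ G (c₁.L - s) * G t := by
          rw [hG]
          rw [← Real.exp_add]
          apply Real.exp_le_exp.2
          have hsq : ((c₁.L - s) + t)^2 / 4 ≤ D^2 := by nlinarith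
          have hcr : 0 ≤ (c₁.L - s) * t := mul_nonneg (by linarith [hs.2]) ht.1
          rw [neg_div]
          have : ((c₁.L - s)^2 + t^2) / (4 * σx^2) ≤ D^2 / σx^2 := by
            rw [div_le_div_iff₀ (by positivity) (by positivity)]
            nlinarith
          calc -(D ^ 2 / σx ^ 2) ≤ -(((c₁.L - s)^2 + t^2) / (4 * σx^2)) := by linarith
          _ = -(1/(4*σx^2)) * (c₁.L - s)^2 + -(1/(4*σx^2)) * t^2 := by ring
        calc F₁₂ s t ≤ Real.exp (-D ^ 2 / σx ^ 2) := hstep1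
        _ ≤ G (c₁.L - s) * G t := h3
        _ ≤ G (c₁.L - s) * G t + q := by linarith
      · -- far from junction: constant bound
        rw [min_eq_right hcase] at hjun
        have h3 : Real.exp (-D ^ 2 / σx ^ 2) ≤ q := by
          have h4 : Real.exp (-D ^ 2 / σx ^ 2) ≤ Real.exp (-(r^2/4) / σx ^ 2) := by
            apply Real.exp_le_exp.2
            rw [neg_div, neg_div, neg_le_neg_iff]
            gcongr
            nlinarith
          refine h4.trans ?_
          have hx0 : 0 < r^2/4/σx^2 := by positivity
          have h5 : r^2/4/σx^2 ≤ Real.exp (r^2/4/σx^2) := by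
            linarith [Real.add_one_le_exp (r^2/4/σx^2)]
          rw [neg_div, Real.exp_neg, hq]
          calc (Real.exp (r^2/4/σx^2))⁻¹ ≤ (r^2/4/σx^2)⁻¹ := by
                apply inv_anti₀ hx0 h5
          _ = 4*σx^2/r^2 := by field_simp
        calc F₁₂ s t ≤ Real.exp (-D ^ 2 / σx ^ 2) := hstep1
        _ ≤ q := h3
        _ ≤ G (c₁.L - s) * G t + q := by
              have := mul_nonneg (hGnonneg (c₁.L - s)) (hGnonneg t)
              linarith
    -- integrate the bound
    set I₂ : ℝ := ∫ t in (0:ℝ)..c₂.L, G t with hI₂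
    have hI₂nonneg : 0 ≤ I₂ :=
      intervalIntegral.integral_nonneg hL₂.le (fun t _ => hGnonneg t)
    have hI₂le : I₂ ≤ 2*σx := gauss_half_le hσx hL₂.le
    have hinner : ∀ s ∈ Set.Icc (0:ℝ) c₁.L,
        (∫ t in (0:ℝ)..c₂.L, F₁₂ s t) ≤ G (c₁.L - s) * I₂ + c₂.L * q := by
      intro s hs
      have h1 : (∫ t in (0:ℝ)..c₂.L, F₁₂ s t) ≤
          ∫ t in (0:ℝ)..c₂.L, (G (c₁.L - s) * G t + q) := by
        apply intervalIntegral.integral_mono_on hL₂.le (innerInt c₁ c₂ σx σt)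
        · exact ((continuous_const.mul hGcont).add continuous_const).intervalIntegrable _ _
        · exact fun t ht => hpt s hs t ht
      refine h1.trans_eq ?_
      rw [intervalIntegral.integral_add (f := fun t => G (c₁.L - s) * G t)
            ((continuous_const.mul hGcont).intervalIntegrable _ _)
            intervalIntegrable_const,
          intervalIntegral.integral_const_mul, intervalIntegral.integral_const,
          smul_eq_mul, sub_zero]
    have houter : V σx σt c₁ c₂ ≤
        ∫ s in (0:ℝ)..c₁.L, (G (c₁.L - s) * I₂ + c₂.L * q) := by
      unfold V vprod
      apply intervalIntegral.integral_mono_on hL₁.le (gInt c₁ c₂ σx σt)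
      · apply Continuous.intervalIntegrable
        exact ((hGcont.comp (continuous_const.sub continuous_id)).mul
          continuous_const).add continuous_const
      · exact hinner
    have hI₁ : (∫ s in (0:ℝ)..c₁.L, G (c₁.L - s)) = ∫ u in (0:ℝ)..c₁.L, G u := by
      rw [intervalIntegral.integral_comp_sub_left G c₁.L]
      simp
    have hI₁nonneg : 0 ≤ ∫ s in (0:ℝ)..c₁.L, G (c₁.L - s) := by
      rw [hI₁]
      exact intervalIntegral.integral_nonneg hL₁.le (fun u _ => hGnonneg u)
    have hI₁le : (∫ s in (0:ℝ)..c₁.L, G (c₁.L - s)) ≤ 2*σx := by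
      rw [hI₁]; exact gauss_half_le hσx hL₁.le
    have hGJ : IntervalIntegrable (fun s : ℝ => G (c₁.L - s) * I₂) volume 0 c₁.L := by
      apply Continuous.intervalIntegrable
      exact (hGcont.comp (continuous_const.sub continuous_id)).mul continuous_const
    have hcalc : (∫ s in (0:ℝ)..c₁.L, (G (c₁.L - s) * I₂ + c₂.L * q)) =
        (∫ s in (0:ℝ)..c₁.L, G (c₁.L - s)) * I₂ + c₁.L * (c₂.L * q) := by
      rw [intervalIntegral.integral_add hGJ intervalIntegrable_const,
          intervalIntegral.integral_mul_const, intervalIntegral.integral_const,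
          smul_eq_mul, sub_zero]
    refine houter.trans ?_
    rw [hcalc, hC, hq]
    have h2 : (∫ s in (0:ℝ)..c₁.L, G (c₁.L - s)) * I₂ ≤ (2*σx) * (2*σx) :=
      mul_le_mul hI₁le hI₂le hI₂nonneg (by positivity)
    have h3 : c₁.L * (c₂.L * (4*σx^2/r^2)) = (4 * c₁.L * c₂.L / r^2) * σx^2 := by ring
    nlinarith
  -- ### Step 3: conclusion
  have hfin : C * σx^2 ≤ ε * (cst * σx) := by
    have h1 : C * σx ≤ ε * cst := by
      rw [le_div_iff₀ hC0] at hσxC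
      nlinarith
    nlinarith
  calc V σx σt c₁ c₂ ≤ C * σx^2 := hcross
  _ ≤ ε * (cst * σx) := hfin
  _ ≤ ε * (V σx σt c₁ c₁ + V σx σt c₂ c₂) := by
      apply mul_le_mul_of_nonneg_left ?_ hε.le
      linarith
end

section
/- Let β : [0,L₁] → ℝ^d and δ : [0,L₂] → ℝ^d be consecutive unit-speed curves whose derivatives are Lipschitz continuous and which satisfy Assumption 1, and let β⊕δ denote their concatenation. Then V(β⊕δ, β⊕δ) / (V(β,β) + V(δ,δ)) → 1 as σ_x, σ_t → 0 with σ_x ≍ σ_t; that is, for all k₁, k₂ > 0 and all ε > 0 there exists δ₀ > 0 such that for every σ_x ∈ (0,δ₀) and every σ_t with k₁σ_x ≤ σ_t ≤ k₂σ_x one has |V(β⊕δ, β⊕δ) − V(β,β) − V(δ,δ)| ≤ ε · (V(β,β) + V(δ,δ)). -/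
open Set MeasureTheory

/-- Concatenation of two parameterized maps: `(f ⊕ g)(s) = f s` for `s ≤ L₀` and
`(f ⊕ g)(s) = g (s - L₀)` for `s > L₀`. Applied both to curves and to their derivatives. -/
noncomputable def concat {d : ℕ} (L₀ : ℝ) (f g : ℝ → EuclideanSpace ℝ (Fin d)) :
    ℝ → EuclideanSpace ℝ (Fin d) :=
  fun s => if s ≤ L₀ then f s else g (s - L₀)

/-- The Gaussian varifold self inner product of the concatenation `α ⊕ β` of two
consecutive unit-speed curves, parameterized over `[0, α.L + β.L]`. -/
noncomputable def Vconcat {d : ℕ} (σx σt : ℝ) (a b c e : UnitSpeedCurve d) : ℝ :=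
  vprod d σx σt (a.L + b.L) (c.L + e.L)
    (concat a.L a.γ b.γ) (concat a.L a.γ' b.γ')
    (concat c.L c.γ e.γ) (concat c.L c.γ' e.γ')


variable {d : ℕ}
open scoped RealInnerProductSpace


variable {d : ℕ}


/-- kernel -/
noncomputable def ker (σx σt : ℝ) (f f' g g' : ℝ → EuclideanSpace ℝ (Fin d)) (s t : ℝ) : ℝ :=
  Real.exp (-‖f s - g t‖ ^ 2 / σx ^ 2) * Real.exp (-‖f' s - g' t‖ ^ 2 / σt ^ 2)

lemma ker_nonneg (σx σt : ℝ) (f f' g g' : ℝ → EuclideanSpace ℝ (Fin d)) (s t : ℝ) :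
    0 ≤ ker σx σt f f' g g' s t :=
  mul_nonneg (Real.exp_pos _).le (Real.exp_pos _).le

lemma ker_le_one (σx σt : ℝ) (f f' g g' : ℝ → EuclideanSpace ℝ (Fin d)) (s t : ℝ) :
    ker σx σt f f' g g' s t ≤ 1 := by
  have h1 : Real.exp (-‖f s - g t‖ ^ 2 / σx ^ 2) ≤ 1 := by
    apply Real.exp_le_one_iff.2
    exact div_nonpos_of_nonpos_of_nonneg (neg_nonpos.2 (by positivity)) (by positivity)
  have h2 : Real.exp (-‖f' s - g' t‖ ^ 2 / σt ^ 2) ≤ 1 := by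
    apply Real.exp_le_one_iff.2
    exact div_nonpos_of_nonpos_of_nonneg (neg_nonpos.2 (by positivity)) (by positivity)
  calc ker σx σt f f' g g' s t ≤ 1 * 1 :=
        mul_le_mul h1 h2 (Real.exp_pos _).le one_pos.le
    _ = 1 := by ring

lemma ker_le_exp (σx σt : ℝ) (f f' g g' : ℝ → EuclideanSpace ℝ (Fin d)) (s t : ℝ) :
    ker σx σt f f' g g' s t ≤ Real.exp (-‖f s - g t‖ ^ 2 / σx ^ 2) := by
  have h2 : Real.exp (-‖f' s - g' t‖ ^ 2 / σt ^ 2) ≤ 1 := by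
    apply Real.exp_le_one_iff.2
    exact div_nonpos_of_nonpos_of_nonneg (neg_nonpos.2 (by positivity)) (by positivity)
  calc ker σx σt f f' g g' s t ≤ Real.exp (-‖f s - g t‖ ^ 2 / σx ^ 2) * 1 :=
        mul_le_mul_of_nonneg_left h2 (Real.exp_pos _).le
    _ = _ := by ring

/-- continuity of a composed kernel -/
lemma contOn_ker_comp {σx σt : ℝ} {p q p' q' : ℝ → (EuclideanSpace ℝ (Fin d))} {B : Set ℝ}
    (hp : ContinuousOn p B) (hq : ContinuousOn q B)
    (hp' : ContinuousOn p' B) (hq' : ContinuousOn q' B) :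
    ContinuousOn (fun u => Real.exp (-‖p u - q u‖ ^ 2 / σx ^ 2) *
      Real.exp (-‖p' u - q' u‖ ^ 2 / σt ^ 2)) B := by
  apply ContinuousOn.mul
  · exact Real.continuous_exp.comp_continuousOn
      ((((hp.sub hq).norm.pow 2).neg).div_const _)
  · exact Real.continuous_exp.comp_continuousOn
      ((((hp'.sub hq').norm.pow 2).neg).div_const _)

lemma contOn_ker_t {σx σt : ℝ} {f f' g g' : ℝ → (EuclideanSpace ℝ (Fin d))} {B : Set ℝ} (s : ℝ)
    (hg : ContinuousOn g B) (hg' : ContinuousOn g' B) :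
    ContinuousOn (fun t => ker σx σt f f' g g' s t) B :=
  contOn_ker_comp continuousOn_const hg continuousOn_const hg'

lemma contOn_ker_s {σx σt : ℝ} {f f' g g' : ℝ → (EuclideanSpace ℝ (Fin d))} {A : Set ℝ} (t : ℝ)
    (hf : ContinuousOn f A) (hf' : ContinuousOn f' A) :
    ContinuousOn (fun s => ker σx σt f f' g g' s t) A :=
  contOn_ker_comp hf continuousOn_const hf' continuousOn_const

/-- continuity of the parametric inner integral -/
lemma contOn_inner {σx σt L₂ : ℝ} (hL₂ : 0 ≤ L₂) {f f' g g' : ℝ → (EuclideanSpace ℝ (Fin d))} {A : Set ℝ}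
    (hf : ContinuousOn f A) (hf' : ContinuousOn f' A)
    (hg : ContinuousOn g (Icc 0 L₂)) (hg' : ContinuousOn g' (Icc 0 L₂)) :
    ContinuousOn (fun s => ∫ t in (0:ℝ)..L₂, ker σx σt f f' g g' s t) A := by
  simp only [intervalIntegral.integral_of_le hL₂]
  apply MeasureTheory.continuousOn_of_dominated (bound := fun _ => (1:ℝ))
  · intro s _
    exact ((contOn_ker_t s hg hg').mono Ioc_subset_Icc_self).aestronglyMeasurable
      measurableSet_Ioc
  · intro s _
    filter_upwards with t
    rw [Real.norm_eq_abs, abs_of_nonneg (ker_nonneg _ _ _ _ _ _ _ _)]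
    exact ker_le_one _ _ _ _ _ _ _ _
  · simp [Real.volume_Ioc]
  · filter_upwards with t
    exact contOn_ker_s t hf hf'

lemma intervalIntegrable_ker {σx σt L₂ : ℝ} (hL₂ : 0 ≤ L₂) {f f' g g' : ℝ → (EuclideanSpace ℝ (Fin d))} (s : ℝ)
    (hg : ContinuousOn g (Icc 0 L₂)) (hg' : ContinuousOn g' (Icc 0 L₂)) :
    IntervalIntegrable (fun t => ker σx σt f f' g g' s t) volume 0 L₂ := by
  apply ContinuousOn.intervalIntegrable
  rw [uIcc_of_le hL₂]
  exact contOn_ker_t s hg hg'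

/-- Key monotonicity: `u ↦ ⟪γ' a, γ u⟫ - u - K²(a-u)³/6` is monotone on `[0,L]`. -/
lemma inner_progress_mono {γ γ' : ℝ → (EuclideanSpace ℝ (Fin d))} {L K : ℝ}
    (hderiv : ∀ u ∈ Icc (0:ℝ) L, HasDerivWithinAt γ (γ' u) (Icc 0 L) u)
    (hunit : ∀ u ∈ Icc (0:ℝ) L, ‖γ' u‖ = 1)
    (hlip : ∀ u ∈ Icc (0:ℝ) L, ∀ v ∈ Icc (0:ℝ) L, ‖γ' u - γ' v‖ ≤ K * |u - v|)
    {a : ℝ} (ha : a ∈ Icc (0:ℝ) L) :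
    MonotoneOn (fun u => ⟪γ' a, γ u⟫ - u - K^2 * (a-u)^3 / 6) (Icc 0 L) := by
  set w := γ' a with hw
  have hφ : ∀ u ∈ Icc (0:ℝ) L,
      HasDerivWithinAt (fun u => ⟪w, γ u⟫ - u - K^2 * (a-u)^3 / 6)
        (⟪w, γ' u⟫ - 1 + K^2 * (a-u)^2 / 2) (Icc 0 L) u := by
    intro u hu
    have h1 : HasDerivWithinAt (fun t => ⟪w, γ t⟫) (⟪w, γ' u⟫ + ⟪(0 : EuclideanSpace ℝ (Fin d)), γ u⟫)
        (Icc 0 L) u := (hasDerivWithinAt_const u _ w).inner ℝ (hderiv u hu)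
    have h2 : HasDerivWithinAt (fun t : ℝ => (a - t)^3) (3 * (a - u)^2 * (0 - 1))
        (Icc 0 L) u := by
      have := (((hasDerivAt_id u).const_sub a).pow 3).hasDerivWithinAt (s := Icc (0:ℝ) L)
      refine this.congr_deriv ?_
      simp only [id]; norm_num
    have h3 := ((h1.sub (hasDerivWithinAt_id u _)).sub
      ((h2.const_mul (K^2)).div_const 6))
    refine h3.congr_deriv ?_
    simp [inner_zero_left]
    ring
  apply monotoneOn_of_hasDerivWithinAt_nonneg (convex_Icc 0 L)
    (fun u hu => (hφ u hu).continuousWithinAt)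
    (f' := fun u => ⟪w, γ' u⟫ - 1 + K^2 * (a-u)^2 / 2)
  · intro u hu
    exact (hφ u (interior_subset hu)).mono interior_subset
  · intro u hu
    rw [interior_Icc] at hu
    have hu' : u ∈ Icc (0:ℝ) L := Ioo_subset_Icc_self hu
    have hl := hlip a ha u hu'
    have hexp : ‖w - γ' u‖^2 = ‖w‖^2 - 2 * ⟪w, γ' u⟫ + ‖γ' u‖^2 := norm_sub_sq_real w (γ' u)
    rw [hunit a ha, hunit u hu'] at hexp
    have hn : (0:ℝ) ≤ ‖w - γ' u‖ := norm_nonneg _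
    have habs : |a - u|^2 = (a - u)^2 := sq_abs _
    nlinarith [sq_nonneg (a-u), sq_nonneg K]

lemma concat_left {L₀ : ℝ} {f g : ℝ → EuclideanSpace ℝ (Fin d)} {s : ℝ} (h : s ≤ L₀) :
    concat L₀ f g s = f s := if_pos h

lemma concat_right {L₀ : ℝ} {f g : ℝ → EuclideanSpace ℝ (Fin d)} (hfg : f L₀ = g 0)
    {s : ℝ} (h : L₀ ≤ s) : concat L₀ f g s = g (s - L₀) := by
  unfold concat
  split_ifs with h'
  · have : s = L₀ := le_antisymm h' h
    subst this
    simp [hfg]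
  · rfl

lemma contOn_concat {L₀ L₁ : ℝ} (h₀ : 0 ≤ L₀) (h₁ : 0 ≤ L₁)
    {f g : ℝ → EuclideanSpace ℝ (Fin d)}
    (hf : ContinuousOn f (Icc 0 L₀)) (hg : ContinuousOn g (Icc 0 L₁))
    (hfg : f L₀ = g 0) : ContinuousOn (concat L₀ f g) (Icc 0 (L₀ + L₁)) := by
  have hL : L₀ ≤ L₀ + L₁ := by linarith
  intro x hx
  rw [show Icc (0:ℝ) (L₀ + L₁) = Icc 0 L₀ ∪ Icc L₀ (L₀ + L₁) from
    (Icc_union_Icc_eq_Icc h₀ hL).symm] at hx ⊢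
  apply ContinuousWithinAt.union
  · by_cases hx0 : x ∈ Icc (0:ℝ) L₀
    · exact ((hf x hx0).congr (fun y hy => concat_left hy.2) (concat_left hx0.2))
    · exact continuousWithinAt_of_notMem_closure (by rwa [closure_Icc])
  · by_cases hx0 : x ∈ Icc L₀ (L₀ + L₁)
    · have hcomp : ContinuousOn (fun y => g (y - L₀)) (Icc L₀ (L₀ + L₁)) := by
        apply hg.comp (Continuous.continuousOn (by continuity))
        intro y hy
        simp only []; exact ⟨by simp; linarith [hy.1], by simp; linarith [hy.2]⟩
      exact ((hcomp x hx0).congr (fun y hy => concat_right hfg hy.1)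
        (concat_right hfg hx0.1))
    · exact continuousWithinAt_of_notMem_closure (by rwa [closure_Icc])


lemma intervalIntegrable_congr' {F G : ℝ → ℝ} {a b : ℝ} (h : EqOn F G (uIcc a b))
    (hG : IntervalIntegrable G volume a b) : IntervalIntegrable F volume a b := by
  rw [intervalIntegrable_iff] at hG ⊢
  exact hG.congr_fun (fun x hx => (h (uIoc_subset_uIcc hx)).symm) measurableSet_uIoc

/-- Split and shift an interval integral over `[0, L₁+L₂]`. -/
lemma integral_split_shift {L₁ L₂ : ℝ} (h₁ : 0 ≤ L₁) (h₂ : 0 ≤ L₂) {F G H : ℝ → ℝ}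
    (hFG : ∀ s ∈ Icc (0:ℝ) L₁, F s = G s)
    (hFH : ∀ s ∈ Icc (0:ℝ) L₂, F (s + L₁) = H s)
    (hG : ContinuousOn G (Icc 0 L₁)) (hH : ContinuousOn H (Icc 0 L₂)) :
    ∫ s in (0:ℝ)..(L₁+L₂), F s =
      (∫ s in (0:ℝ)..L₁, G s) + ∫ s in (0:ℝ)..L₂, H s := by
  have hGi : IntervalIntegrable G volume 0 L₁ := by
    exact (hG.mono (by rw [uIcc_of_le h₁])).intervalIntegrable
  have hFH' : ∀ s ∈ Icc L₁ (L₁+L₂), F s = H (s - L₁) := by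
    intro s hs
    have h := hFH (s - L₁) ⟨by linarith [hs.1], by linarith [hs.2]⟩
    rwa [sub_add_cancel] at h
  have hH' : ContinuousOn (fun s => H (s - L₁)) (Icc L₁ (L₁+L₂)) := by
    apply hH.comp (Continuous.continuousOn (by continuity))
    intro y hy
    constructor
    · simp only; linarith [hy.1]
    · simp only; linarith [hy.2]
  have hHi : IntervalIntegrable (fun s => H (s - L₁)) volume L₁ (L₁+L₂) := by
    exact (hH'.mono (by rw [uIcc_of_le (by linarith : L₁ ≤ L₁ + L₂)])).intervalIntegrable
  have i1 : IntervalIntegrable F volume 0 L₁ :=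
    intervalIntegrable_congr' (by rwa [uIcc_of_le h₁]) hGi
  have i2 : IntervalIntegrable F volume L₁ (L₁+L₂) :=
    intervalIntegrable_congr' (by rwa [uIcc_of_le (by linarith : L₁ ≤ L₁ + L₂)]) hHi
  have e1 : (∫ s in (0:ℝ)..L₁, F s) = ∫ s in (0:ℝ)..L₁, G s :=
    intervalIntegral.integral_congr (by rwa [uIcc_of_le h₁])
  have e2 : (∫ s in L₁..(L₁+L₂), F s) = ∫ s in (0:ℝ)..L₂, H s := by
    rw [intervalIntegral.integral_congr (g := fun s => H (s - L₁))
      (by rwa [uIcc_of_le (by linarith : L₁ ≤ L₁ + L₂)])]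
    have := intervalIntegral.integral_comp_sub_right (a := L₁) (b := L₁ + L₂) H L₁
    simpa using this
  rw [← intervalIntegral.integral_add_adjacent_intervals i1 i2, e1, e2]

lemma exp_neg_le_inv {y : ℝ} (hy : 0 < y) : Real.exp (-y) ≤ 1/y := by
  have h1 : y < Real.exp y := by nlinarith [Real.add_one_le_exp y]
  rw [Real.exp_neg, one_div]
  exact inv_anti₀ hy h1.le

lemma gauss_tail {σ Lx : ℝ} (hσ : 0 < σ) (hL : 0 ≤ Lx) :
    ∫ t in (0:ℝ)..Lx, Real.exp (-t^2/(4*σ^2)) ≤ 2*σ := by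
  have hb : (0:ℝ) < 1/(4*σ^2) := by positivity
  have hinteg : IntegrableOn (fun t : ℝ => Real.exp (-(1/(4*σ^2)) * t^2)) (Ioi 0) volume :=
    (integrable_exp_neg_mul_sq hb).integrableOn
  have heq : ∀ t : ℝ, Real.exp (-t^2/(4*σ^2)) = Real.exp (-(1/(4*σ^2)) * t^2) := by
    intro t; congr 1; field_simp
  simp only [heq]
  rw [intervalIntegral.integral_of_le hL]
  have hmono : (∫ t in Ioc (0:ℝ) Lx, Real.exp (-(1/(4*σ^2)) * t^2)) ≤
      ∫ t in Ioi (0:ℝ), Real.exp (-(1/(4*σ^2)) * t^2) := by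
    apply setIntegral_mono_set hinteg
    · filter_upwards with t using (Real.exp_pos _).le
    · exact (Ioc_subset_Ioi_self).eventuallyLE
  refine hmono.trans ?_
  rw [integral_gaussian_Ioi]
  have h1 : Real.sqrt (Real.pi / (1/(4*σ^2))) ≤ 4*σ := by
    have he : Real.pi / (1/(4*σ^2)) = Real.pi * (4*σ^2) := by field_simp
    rw [he]
    have hle : Real.pi * (4*σ^2) ≤ (4*σ)^2 := by nlinarith [Real.pi_le_four, sq_nonneg σ]
    calc Real.sqrt (Real.pi * (4*σ^2)) ≤ Real.sqrt ((4*σ)^2) := Real.sqrt_le_sqrt hle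
      _ = 4*σ := Real.sqrt_sq (by positivity)
  linarith

/-- Near-corner distance lower bound. -/
lemma corner_dist_lower (b c : UnitSpeedCurve d)
    (hpt : b.γ b.L = c.γ 0) (hdir : b.γ' b.L = c.γ' 0)
    {K : ℝ} (hK : 1 ≤ K)
    (hlipb : ∀ u ∈ Icc (0:ℝ) b.L, ∀ v ∈ Icc (0:ℝ) b.L, ‖b.γ' u - b.γ' v‖ ≤ K * |u - v|)
    (hlipc : ∀ u ∈ Icc (0:ℝ) c.L, ∀ v ∈ Icc (0:ℝ) c.L, ‖c.γ' u - c.γ' v‖ ≤ K * |u - v|)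
    {s t : ℝ} (hs : s ∈ Icc (0:ℝ) b.L) (ht : t ∈ Icc (0:ℝ) c.L)
    (hr : (b.L - s) + t ≤ 1 / K) :
    ((b.L - s) + t) / 2 ≤ ‖b.γ s - c.γ t‖ := by
  have hK0 : (0:ℝ) < K := lt_of_lt_of_le one_pos hK
  have hbL : b.L ∈ Icc (0:ℝ) b.L := ⟨b.L_pos.le, le_rfl⟩
  have h0c : (0:ℝ) ∈ Icc (0:ℝ) c.L := ⟨le_rfl, c.L_pos.le⟩
  set w : EuclideanSpace ℝ (Fin d) := b.γ' b.L with hw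
  -- progress along b
  have hmb := inner_progress_mono b.hasDeriv b.unitSpeed hlipb hbL hs hbL hs.2
  have hmc := inner_progress_mono c.hasDeriv c.unitSpeed hlipc h0c h0c ht ht.1
  simp only [sub_self] at hmb hmc
  rw [← hdir] at hmc
  -- hmb : ⟪w, b.γ s⟫ - s - K^2*(b.L-s)^3/6 ≤ ⟪w, b.γ b.L⟫ - b.L - K^2*0^3/6
  -- hmc : ⟪w, c.γ 0⟫ - 0 - K^2*(0-0)^3/6 ≤ ⟪w, c.γ t⟫ - t - K^2*(0-t)^3/6
  have hinner : ((b.L - s) + t) - K^2 * ((b.L-s)^3 + t^3) / 6 ≤ ⟪w, c.γ t - b.γ s⟫ := by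
    have hsplit : ⟪w, c.γ t - b.γ s⟫
        = (⟪w, c.γ t⟫ - ⟪w, c.γ 0⟫) + (⟪w, b.γ b.L⟫ - ⟪w, b.γ s⟫) := by
      rw [inner_sub_right]
      have : ⟪w, c.γ 0⟫ = ⟪w, b.γ b.L⟫ := by rw [hpt]
      linarith [this]
    rw [hsplit]
    have e1 : ((0:ℝ) - t)^3 = - t^3 := by ring
    rw [e1] at hmc
    nlinarith [hmb, hmc]
  have hA : 0 ≤ b.L - s := by linarith [hs.2]
  have hB : 0 ≤ t := ht.1
  set r : ℝ := (b.L - s) + t with hrdef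
  have hcube : (b.L-s)^3 + t^3 ≤ r^3 := by
    rw [hrdef]
    nlinarith [mul_nonneg hA hB, mul_nonneg (mul_nonneg hA hB) (add_nonneg hA hB)]
  have hKr : K * r ≤ 1 := by
    rw [le_div_iff₀ hK0] at hr
    linarith [hr]
  have hr0 : 0 ≤ r := by positivity
  have hfinal : r / 2 ≤ ⟪w, c.γ t - b.γ s⟫ := by
    have h2 : K^2 * ((b.L-s)^3 + t^3) ≤ K^2 * r^3 :=
      mul_le_mul_of_nonneg_left hcube (by positivity)
    have hKr0 : (0:ℝ) ≤ K * r := mul_nonneg hK0.le hr0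
    have hsq : K^2 * r^2 ≤ 1 := by nlinarith [mul_le_mul hKr hKr hKr0 zero_le_one]
    have h3 : K^2 * r^3 ≤ r := by nlinarith [hsq, hr0]
    linarith [hinner]
  have hle : ⟪w, c.γ t - b.γ s⟫ ≤ ‖c.γ t - b.γ s‖ := by
    have := real_inner_le_norm w (c.γ t - b.γ s)
    rwa [b.unitSpeed b.L hbL, one_mul] at this
  rw [show ‖b.γ s - c.γ t‖ = ‖c.γ t - b.γ s‖ from norm_sub_rev _ _]
  linarith


lemma contOn_curve (b : UnitSpeedCurve d) : ContinuousOn b.γ (Icc 0 b.L) :=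
  fun s hs => (b.hasDeriv s hs).continuousWithinAt

lemma vconcat_decomp (b c : UnitSpeedCurve d)
    (hpt : b.γ b.L = c.γ 0) (hdir : b.γ' b.L = c.γ' 0) (σx σt : ℝ) :
    Vconcat σx σt b c b c = V σx σt b b + V σx σt c c
      + (∫ s in (0:ℝ)..b.L, ∫ t in (0:ℝ)..c.L, ker σx σt b.γ b.γ' c.γ c.γ' s t)
      + (∫ s in (0:ℝ)..c.L, ∫ t in (0:ℝ)..b.L, ker σx σt c.γ c.γ' b.γ b.γ' s t) := by
  have hL₁ : (0:ℝ) ≤ b.L := b.L_pos.le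
  have hL₂ : (0:ℝ) ≤ c.L := c.L_pos.le
  set f := concat b.L b.γ c.γ with hfdef
  set f' := concat b.L b.γ' c.γ' with hf'def
  have hbγ : ContinuousOn b.γ (Icc 0 b.L) := contOn_curve b
  have hcγ : ContinuousOn c.γ (Icc 0 c.L) := contOn_curve c
  have hfc : ContinuousOn f (Icc 0 (b.L + c.L)) := contOn_concat hL₁ hL₂ hbγ hcγ hpt
  have hf'c : ContinuousOn f' (Icc 0 (b.L + c.L)) :=
    contOn_concat hL₁ hL₂ b.contDeriv c.contDeriv hdir
  have F1γ : ∀ s ∈ Icc (0:ℝ) b.L, f s = b.γ s := fun s hs => concat_left hs.2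
  have F1γ' : ∀ s ∈ Icc (0:ℝ) b.L, f' s = b.γ' s := fun s hs => concat_left hs.2
  have F2γ : ∀ t ∈ Icc (0:ℝ) c.L, f (t + b.L) = c.γ t := by
    intro t ht
    rw [hfdef, concat_right hpt (by linarith [ht.1])]
    simp
  have F2γ' : ∀ t ∈ Icc (0:ℝ) c.L, f' (t + b.L) = c.γ' t := by
    intro t ht
    rw [hf'def, concat_right hdir (by linarith [ht.1])]
    simp
  have hinner : ∀ s : ℝ, (∫ t in (0:ℝ)..(b.L + c.L), ker σx σt f f' f f' s t)
      = (∫ t in (0:ℝ)..b.L, ker σx σt f f' b.γ b.γ' s t)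
      + ∫ t in (0:ℝ)..c.L, ker σx σt f f' c.γ c.γ' s t := by
    intro s
    apply integral_split_shift hL₁ hL₂
    · intro t ht; simp only [ker]; rw [F1γ t ht, F1γ' t ht]
    · intro t ht; simp only [ker]; rw [F2γ t ht, F2γ' t ht]
    · exact contOn_ker_t s hbγ b.contDeriv
    · exact contOn_ker_t s hcγ c.contDeriv
  have hVc : Vconcat σx σt b c b c = ∫ s in (0:ℝ)..(b.L + c.L),
      ((∫ t in (0:ℝ)..b.L, ker σx σt f f' b.γ b.γ' s t)
      + ∫ t in (0:ℝ)..c.L, ker σx σt f f' c.γ c.γ' s t) := by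
    rw [show Vconcat σx σt b c b c = ∫ s in (0:ℝ)..(b.L + c.L),
      ∫ t in (0:ℝ)..(b.L + c.L), ker σx σt f f' f f' s t from rfl]
    exact intervalIntegral.integral_congr (fun s _ => hinner s)
  have hAcont : ContinuousOn (fun s => ∫ t in (0:ℝ)..b.L, ker σx σt f f' b.γ b.γ' s t)
      (Icc 0 (b.L + c.L)) := contOn_inner hL₁ hfc hf'c hbγ b.contDeriv
  have hBcont : ContinuousOn (fun s => ∫ t in (0:ℝ)..c.L, ker σx σt f f' c.γ c.γ' s t)
      (Icc 0 (b.L + c.L)) := contOn_inner hL₂ hfc hf'c hcγ c.contDeriv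
  have hIccL : uIcc (0:ℝ) (b.L + c.L) = Icc 0 (b.L + c.L) := uIcc_of_le (by linarith)
  have hAint : IntervalIntegrable (fun s => ∫ t in (0:ℝ)..b.L, ker σx σt f f' b.γ b.γ' s t)
      volume 0 (b.L + c.L) := (hAcont.mono (by rw [hIccL])).intervalIntegrable
  have hBint : IntervalIntegrable (fun s => ∫ t in (0:ℝ)..c.L, ker σx σt f f' c.γ c.γ' s t)
      volume 0 (b.L + c.L) := (hBcont.mono (by rw [hIccL])).intervalIntegrable
  rw [hVc, intervalIntegral.integral_add hAint hBint]
  have hsplitA : (∫ s in (0:ℝ)..(b.L + c.L), ∫ t in (0:ℝ)..b.L, ker σx σt f f' b.γ b.γ' s t)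
      = (∫ s in (0:ℝ)..b.L, ∫ t in (0:ℝ)..b.L, ker σx σt b.γ b.γ' b.γ b.γ' s t)
      + ∫ s in (0:ℝ)..c.L, ∫ t in (0:ℝ)..b.L, ker σx σt c.γ c.γ' b.γ b.γ' s t := by
    apply integral_split_shift hL₁ hL₂
    · intro s hs
      apply intervalIntegral.integral_congr
      intro t _
      simp only [ker]
      rw [F1γ s hs, F1γ' s hs]
    · intro s hs
      apply intervalIntegral.integral_congr
      intro t _
      simp only [ker]
      rw [F2γ s hs, F2γ' s hs]
    · exact contOn_inner hL₁ hbγ b.contDeriv hbγ b.contDeriv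
    · exact contOn_inner hL₁ hcγ c.contDeriv hbγ b.contDeriv
  have hsplitB : (∫ s in (0:ℝ)..(b.L + c.L), ∫ t in (0:ℝ)..c.L, ker σx σt f f' c.γ c.γ' s t)
      = (∫ s in (0:ℝ)..b.L, ∫ t in (0:ℝ)..c.L, ker σx σt b.γ b.γ' c.γ c.γ' s t)
      + ∫ s in (0:ℝ)..c.L, ∫ t in (0:ℝ)..c.L, ker σx σt c.γ c.γ' c.γ c.γ' s t := by
    apply integral_split_shift hL₁ hL₂
    · intro s hs
      apply intervalIntegral.integral_congr
      intro t _
      simp only [ker]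
      rw [F1γ s hs, F1γ' s hs]
    · intro s hs
      apply intervalIntegral.integral_congr
      intro t _
      simp only [ker]
      rw [F2γ s hs, F2γ' s hs]
    · exact contOn_inner hL₂ hbγ b.contDeriv hcγ c.contDeriv
    · exact contOn_inner hL₂ hcγ c.contDeriv hcγ c.contDeriv
  rw [hsplitA, hsplitB]
  have hVbb : V σx σt b b = ∫ s in (0:ℝ)..b.L, ∫ t in (0:ℝ)..b.L,
      ker σx σt b.γ b.γ' b.γ b.γ' s t := rfl
  have hVcc : V σx σt c c = ∫ s in (0:ℝ)..c.L, ∫ t in (0:ℝ)..c.L,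
      ker σx σt c.γ c.γ' c.γ c.γ' s t := rfl
  rw [hVbb, hVcc]
  ring


lemma cross_bound {σx σt La Lb ρ : ℝ} (hσ : 0 < σx) (hLa : 0 ≤ La) (hLb : 0 ≤ Lb)
    {p p' q q' : ℝ → EuclideanSpace ℝ (Fin d)}
    (hp : ContinuousOn p (Icc 0 La)) (hp' : ContinuousOn p' (Icc 0 La))
    (hq : ContinuousOn q (Icc 0 Lb)) (hq' : ContinuousOn q' (Icc 0 Lb))
    {u v : ℝ → ℝ} (hu : Continuous u) (hv : Continuous v)
    (hdist : ∀ s ∈ Icc (0:ℝ) La, ∀ t ∈ Icc (0:ℝ) Lb,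
      Real.exp (-‖p s - q t‖^2/σx^2) ≤ Real.exp (-ρ^2/(4*σx^2))
        + Real.exp (-(u s)^2/(4*σx^2)) * Real.exp (-(v t)^2/(4*σx^2)))
    (hIu : (∫ s in (0:ℝ)..La, Real.exp (-(u s)^2/(4*σx^2))) ≤ 2*σx)
    (hIv : (∫ t in (0:ℝ)..Lb, Real.exp (-(v t)^2/(4*σx^2))) ≤ 2*σx) :
    (∫ s in (0:ℝ)..La, ∫ t in (0:ℝ)..Lb, ker σx σt p p' q q' s t)
      ≤ La * Lb * Real.exp (-ρ^2/(4*σx^2)) + 4*σx^2 := by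
  set E₀ := Real.exp (-ρ^2/(4*σx^2)) with hE₀
  set Iv := (∫ t in (0:ℝ)..Lb, Real.exp (-(v t)^2/(4*σx^2))) with hIvdef
  have hE₀0 : 0 ≤ E₀ := (Real.exp_pos _).le
  have hvcont : Continuous fun t => Real.exp (-(v t)^2/(4*σx^2)) := by
    apply Real.continuous_exp.comp
    exact ((hv.pow 2).neg).div_const _
  have hucont : Continuous fun s => Real.exp (-(u s)^2/(4*σx^2)) := by
    apply Real.continuous_exp.comp
    exact ((hu.pow 2).neg).div_const _
  have hIv0 : 0 ≤ Iv := by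
    apply intervalIntegral.integral_nonneg hLb
    intro t _
    exact (Real.exp_pos _).le
  have hIu0 : 0 ≤ ∫ s in (0:ℝ)..La, Real.exp (-(u s)^2/(4*σx^2)) := by
    apply intervalIntegral.integral_nonneg hLa
    intro s _
    exact (Real.exp_pos _).le
  have step1 : ∀ s ∈ Icc (0:ℝ) La, (∫ t in (0:ℝ)..Lb, ker σx σt p p' q q' s t)
      ≤ Lb * E₀ + Real.exp (-(u s)^2/(4*σx^2)) * Iv := by
    intro s hs
    have hmono : (∫ t in (0:ℝ)..Lb, ker σx σt p p' q q' s t)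
        ≤ ∫ t in (0:ℝ)..Lb, (E₀ + Real.exp (-(u s)^2/(4*σx^2)) *
            Real.exp (-(v t)^2/(4*σx^2))) := by
      apply intervalIntegral.integral_mono_on hLb
        (intervalIntegrable_ker hLb s hq hq')
        ((continuous_const.add (continuous_const.mul hvcont)).intervalIntegrable _ _)
      intro t ht
      calc ker σx σt p p' q q' s t ≤ Real.exp (-‖p s - q t‖^2/σx^2) :=
            ker_le_exp _ _ _ _ _ _ _ _
        _ ≤ E₀ + Real.exp (-(u s)^2/(4*σx^2)) * Real.exp (-(v t)^2/(4*σx^2)) :=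
            hdist s hs t ht
    refine hmono.trans ?_
    rw [intervalIntegral.integral_add (g := fun t => Real.exp (-(u s)^2/(4*σx^2)) * Real.exp (-(v t)^2/(4*σx^2))) (intervalIntegrable_const)
      ((continuous_const.mul hvcont).intervalIntegrable _ _),
      intervalIntegral.integral_const, intervalIntegral.integral_const_mul]
    simp [smul_eq_mul]
    exact le_rfl
  have step2 : (∫ s in (0:ℝ)..La, ∫ t in (0:ℝ)..Lb, ker σx σt p p' q q' s t)
      ≤ ∫ s in (0:ℝ)..La, (Lb * E₀ + Real.exp (-(u s)^2/(4*σx^2)) * Iv) := by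
    apply intervalIntegral.integral_mono_on hLa
    · have hcont := contOn_inner hLb hp hp' hq hq' (σx := σx) (σt := σt)
      exact (hcont.mono (by rw [uIcc_of_le hLa])).intervalIntegrable
    · exact ((continuous_const.add (hucont.mul continuous_const)).intervalIntegrable _ _)
    · exact step1
  refine step2.trans ?_
  rw [intervalIntegral.integral_add (g := fun s => Real.exp (-(u s)^2/(4*σx^2)) * Iv) intervalIntegrable_const
    ((hucont.mul continuous_const).intervalIntegrable _ _),
    intervalIntegral.integral_const, intervalIntegral.integral_mul_const]
  have : (∫ s in (0:ℝ)..La, Real.exp (-(u s)^2/(4*σx^2))) * Iv ≤ (2*σx) * (2*σx) :=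
    mul_le_mul hIu hIv hIv0 (by linarith)
  simp only [smul_eq_mul, sub_zero]
  nlinarith [this]


lemma curve_dist_le (b : UnitSpeedCurve d) {s t : ℝ}
    (hs : s ∈ Icc (0:ℝ) b.L) (ht : t ∈ Icc (0:ℝ) b.L) : ‖b.γ s - b.γ t‖ ≤ |s - t| := by
  have := (convex_Icc (0:ℝ) b.L).norm_image_sub_le_of_norm_hasDerivWithin_le
    b.hasDeriv (fun x hx => le_of_eq (b.unitSpeed x hx)) ht hs
  simpa [Real.norm_eq_abs] using this

lemma V_self_lower (b : UnitSpeedCurve d) {K k₁ σx σt : ℝ} (hσ : 0 < σx)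
    (hσx : σx ≤ b.L/2) (hk₁ : 0 < k₁) (hσt1 : k₁*σx ≤ σt) (hK : 0 ≤ K)
    (hlip : ∀ u ∈ Icc (0:ℝ) b.L, ∀ v ∈ Icc (0:ℝ) b.L, ‖b.γ' u - b.γ' v‖ ≤ K * |u - v|) :
    Real.exp (-1) * Real.exp (-(K/k₁)^2) * (b.L/2) * σx ≤ V σx σt b b := by
  have hL₁ : (0:ℝ) ≤ b.L := b.L_pos.le
  set c₀ := Real.exp (-1) * Real.exp (-(K/k₁)^2) with hc₀def
  have hc₀ : 0 < c₀ := mul_pos (Real.exp_pos _) (Real.exp_pos _)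
  have hσt0 : 0 < σt := lt_of_lt_of_le (by positivity) hσt1
  have hbγ : ContinuousOn b.γ (Icc 0 b.L) := contOn_curve b
  -- pointwise kernel lower bound on the diagonal strip
  have hker : ∀ s ∈ Icc (0:ℝ) b.L, ∀ t ∈ Icc (0:ℝ) b.L, |s - t| ≤ σx →
      c₀ ≤ ker σx σt b.γ b.γ' b.γ b.γ' s t := by
    intro s hs t ht hst
    have hd1 : ‖b.γ s - b.γ t‖ ≤ σx := (curve_dist_le b hs ht).trans hst
    have hd2 : ‖b.γ' s - b.γ' t‖ ≤ K * σx := by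
      calc ‖b.γ' s - b.γ' t‖ ≤ K * |s - t| := hlip s hs t ht
        _ ≤ K * σx := mul_le_mul_of_nonneg_left hst hK
    have e1 : Real.exp (-1) ≤ Real.exp (-‖b.γ s - b.γ t‖^2/σx^2) := by
      apply Real.exp_le_exp.2
      rw [neg_div, neg_le_neg_iff, div_le_one (by positivity)]
      nlinarith [norm_nonneg (b.γ s - b.γ t)]
    have e2 : Real.exp (-(K/k₁)^2) ≤ Real.exp (-‖b.γ' s - b.γ' t‖^2/σt^2) := by
      apply Real.exp_le_exp.2
      rw [neg_div, neg_le_neg_iff, div_le_iff₀ (by positivity)]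
      have hkσ : k₁ * σx ≤ σt := hσt1
      have h1 : ‖b.γ' s - b.γ' t‖^2 ≤ (K*σx)^2 := by
        nlinarith [norm_nonneg (b.γ' s - b.γ' t)]
      have h2 : (k₁*σx)^2 ≤ σt^2 := by nlinarith [mul_pos hk₁ hσ]
      have h3 : (K/k₁)^2 * (k₁*σx)^2 = (K*σx)^2 := by
        field_simp
      nlinarith [sq_nonneg (K/k₁)]
    calc c₀ = Real.exp (-1) * Real.exp (-(K/k₁)^2) := hc₀def
      _ ≤ _ := mul_le_mul e1 e2 (Real.exp_pos _).le (Real.exp_pos _).le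
  -- inner integral lower bound
  have hinner : ∀ s ∈ Icc (0:ℝ) (b.L - σx),
      c₀ * σx ≤ ∫ t in (0:ℝ)..b.L, ker σx σt b.γ b.γ' b.γ b.γ' s t := by
    intro s hs
    have hs' : s ∈ Icc (0:ℝ) b.L := ⟨hs.1, by linarith [hs.2]⟩
    have hsub : uIcc s (s+σx) ⊆ Icc (0:ℝ) b.L := by
      rw [uIcc_of_le (by linarith)]
      intro y hy
      exact ⟨by linarith [hy.1, hs.1], by linarith [hy.2, hs.2]⟩
    have hki : IntervalIntegrable (fun t => ker σx σt b.γ b.γ' b.γ b.γ' s t)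
        volume s (s+σx) :=
      ((contOn_ker_t s hbγ b.contDeriv).mono hsub).intervalIntegrable
    have h1 : c₀ * σx ≤ ∫ t in s..(s+σx), ker σx σt b.γ b.γ' b.γ b.γ' s t := by
      have := intervalIntegral.integral_mono_on (a := s) (b := s+σx)
        (f := fun _ => c₀) (g := fun t => ker σx σt b.γ b.γ' b.γ b.γ' s t)
        (by linarith) intervalIntegrable_const hki ?_
      · rw [intervalIntegral.integral_const] at this
        calc c₀ * σx = ((s+σx) - s) • c₀ := by simp [smul_eq_mul]; ring
          _ ≤ _ := this
      · intro t ht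
        apply hker s hs' t (hsub (by rw [uIcc_of_le (by linarith)]; exact ht))
        rw [abs_le]
        exact ⟨by linarith [ht.2], by linarith [ht.1]⟩
    refine h1.trans ?_
    apply intervalIntegral.integral_mono_interval hs.1 (by linarith) (by linarith [hs.2])
    · filter_upwards with t
      exact ker_nonneg _ _ _ _ _ _ _ _
    · exact intervalIntegrable_ker hL₁ s hbγ b.contDeriv
  -- outer
  have hΦcont : ContinuousOn (fun s => ∫ t in (0:ℝ)..b.L, ker σx σt b.γ b.γ' b.γ b.γ' s t)
      (Icc 0 b.L) := contOn_inner hL₁ hbγ b.contDeriv hbγ b.contDeriv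
  have hΦint : IntervalIntegrable (fun s => ∫ t in (0:ℝ)..b.L, ker σx σt b.γ b.γ' b.γ b.γ' s t)
      volume 0 b.L := (hΦcont.mono (by rw [uIcc_of_le hL₁])).intervalIntegrable
  have h2 : (∫ s in (0:ℝ)..(b.L - σx), (c₀ * σx))
      ≤ ∫ s in (0:ℝ)..(b.L - σx), ∫ t in (0:ℝ)..b.L, ker σx σt b.γ b.γ' b.γ b.γ' s t := by
    apply intervalIntegral.integral_mono_on (by linarith) intervalIntegrable_const
      (hΦint.mono_set (by
        rw [uIcc_of_le (by linarith : (0:ℝ) ≤ b.L - σx), uIcc_of_le hL₁]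
        intro y hy
        exact ⟨hy.1, by linarith [hy.2]⟩))
    exact hinner
  have h3 : (∫ s in (0:ℝ)..(b.L - σx), ∫ t in (0:ℝ)..b.L, ker σx σt b.γ b.γ' b.γ b.γ' s t)
      ≤ V σx σt b b := by
    rw [show V σx σt b b = ∫ s in (0:ℝ)..b.L, ∫ t in (0:ℝ)..b.L,
      ker σx σt b.γ b.γ' b.γ b.γ' s t from rfl]
    apply intervalIntegral.integral_mono_interval le_rfl (by linarith) (by linarith)
    · filter_upwards with s
      apply intervalIntegral.integral_nonneg hL₁
      intro t _
      exact ker_nonneg _ _ _ _ _ _ _ _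
    · exact hΦint
  rw [intervalIntegral.integral_const] at h2
  have : c₀ * (b.L/2) * σx ≤ ((b.L - σx) - 0) • (c₀ * σx) := by
    simp only [smul_eq_mul, sub_zero]
    nlinarith [mul_le_mul_of_nonneg_right (show b.L/2 ≤ b.L - σx by linarith)
      (le_of_lt (mul_pos hc₀ hσ))]
  calc Real.exp (-1) * Real.exp (-(K/k₁)^2) * (b.L/2) * σx = c₀ * (b.L/2) * σx := by
        rw [hc₀def]
    _ ≤ ((b.L - σx) - 0) • (c₀ * σx) := this
    _ ≤ _ := le_trans h2 h3

set_option maxHeartbeats 4000000 in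
/-- For consecutive unit-speed curves `β, δ` with Lipschitz derivatives satisfying
Assumption 1, the self inner product of the concatenation `β ⊕ δ` is asymptotically
equivalent to `V(β,β) + V(δ,δ)` as `σx, σt → 0` with `σx ≍ σt`. -/
theorem concat_self_vprod_asymptotic {d : ℕ} (b c : UnitSpeedCurve d)
    (hlip₁ : ∃ K : NNReal, LipschitzOnWith K b.γ' (Set.Icc 0 b.L))
    (hlip₂ : ∃ K : NNReal, LipschitzOnWith K c.γ' (Set.Icc 0 c.L))
    (hconsec_pt : b.γ b.L = c.γ 0)
    (hconsec_dir : b.γ' b.L = c.γ' 0)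
    (hA1 : ∀ s ∈ Set.Icc (0:ℝ) b.L, ∀ s' ∈ Set.Icc (0:ℝ) b.L,
      ∀ t ∈ Set.Icc (0:ℝ) c.L, ∀ t' ∈ Set.Icc (0:ℝ) c.L,
      (b.L - s) + t ≤ (b.L - s') + t' → ‖b.γ s - c.γ t‖ ≤ ‖b.γ s' - c.γ t'‖) :
    ∀ k₁ > (0:ℝ), ∀ k₂ > (0:ℝ), ∀ ε > (0:ℝ), ∃ δ₀ > (0:ℝ),
      ∀ σx : ℝ, 0 < σx → σx < δ₀ → ∀ σt : ℝ, k₁ * σx ≤ σt → σt ≤ k₂ * σx →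
        |Vconcat σx σt b c b c - V σx σt b b - V σx σt c c| ≤
          ε * (V σx σt b b + V σx σt c c) := by
  intro k₁ hk₁ k₂ hk₂ ε hε
  obtain ⟨K₁, hK₁⟩ := hlip₁
  obtain ⟨K₂, hK₂⟩ := hlip₂
  set K : ℝ := max (max (K₁:ℝ) (K₂:ℝ)) 1 with hKdef
  have hK1 : 1 ≤ K := le_max_right _ _
  have hK0 : 0 < K := lt_of_lt_of_le one_pos hK1
  have hlipb : ∀ u ∈ Icc (0:ℝ) b.L, ∀ v ∈ Icc (0:ℝ) b.L,
      ‖b.γ' u - b.γ' v‖ ≤ K * |u - v| := by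
    intro u hu v hv
    have h := hK₁.dist_le_mul u hu v hv
    rw [dist_eq_norm, Real.dist_eq] at h
    refine h.trans (mul_le_mul_of_nonneg_right ?_ (abs_nonneg _))
    calc (K₁:ℝ) ≤ max (K₁:ℝ) (K₂:ℝ) := le_max_left _ _
      _ ≤ K := le_max_left _ _
  have hlipc : ∀ u ∈ Icc (0:ℝ) c.L, ∀ v ∈ Icc (0:ℝ) c.L,
      ‖c.γ' u - c.γ' v‖ ≤ K * |u - v| := by
    intro u hu v hv
    have h := hK₂.dist_le_mul u hu v hv
    rw [dist_eq_norm, Real.dist_eq] at h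
    refine h.trans (mul_le_mul_of_nonneg_right ?_ (abs_nonneg _))
    calc (K₂:ℝ) ≤ max (K₁:ℝ) (K₂:ℝ) := le_max_right _ _
      _ ≤ K := le_max_left _ _
  set r₀ : ℝ := min (min b.L c.L) (1/K) with hr₀def
  have hr₀ : 0 < r₀ := lt_min (lt_min b.L_pos c.L_pos) (by positivity)
  have hr₀b : r₀ ≤ b.L := le_trans (min_le_left _ _) (min_le_left _ _)
  have hr₀c : r₀ ≤ c.L := le_trans (min_le_left _ _) (min_le_right _ _)
  have hr₀K : r₀ ≤ 1/K := min_le_right _ _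
  set c₀ : ℝ := Real.exp (-1) * Real.exp (-(K/k₁)^2) with hc₀def
  have hc₀ : 0 < c₀ := mul_pos (Real.exp_pos _) (Real.exp_pos _)
  set Cs : ℝ := 4*b.L*c.L/r₀^2 + 4 with hCsdef
  have hCs0 : 0 < Cs := by
    have := b.L_pos
    have := c.L_pos
    positivity
  refine ⟨min (b.L/2) (ε*c₀*b.L/(4*Cs)), ?_, ?_⟩
  · have := b.L_pos
    positivity
  intro σx hσ hσδ σt hσt1 hσt2
  have hσb : σx ≤ b.L/2 := le_of_lt (lt_of_lt_of_le hσδ (min_le_left _ _))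
  have hσε : σx ≤ ε*c₀*b.L/(4*Cs) := le_of_lt (lt_of_lt_of_le hσδ (min_le_right _ _))
  have hbL : b.L ∈ Icc (0:ℝ) b.L := ⟨b.L_pos.le, le_rfl⟩
  have hr₀mem : r₀ ∈ Icc (0:ℝ) c.L := ⟨hr₀.le, hr₀c⟩
  -- corner distance bound
  have hcorner : ∀ s ∈ Icc (0:ℝ) b.L, ∀ t ∈ Icc (0:ℝ) c.L,
      min ((b.L - s) + t) r₀ / 2 ≤ ‖b.γ s - c.γ t‖ := by
    intro s hs t ht
    rcases le_total ((b.L - s) + t) r₀ with h | h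
    · rw [min_eq_left h]
      exact corner_dist_lower b c hconsec_pt hconsec_dir hK1 hlipb hlipc hs ht
        (h.trans hr₀K)
    · rw [min_eq_right h]
      have h1 : ‖b.γ b.L - c.γ r₀‖ ≤ ‖b.γ s - c.γ t‖ := by
        apply hA1 b.L hbL s hs r₀ hr₀mem t ht
        simp only [sub_self, zero_add]
        linarith
      refine le_trans ?_ h1
      have h2 := corner_dist_lower b c hconsec_pt hconsec_dir hK1 hlipb hlipc hbL
        hr₀mem (by simpa using hr₀K)
      simpa using h2
  -- exponential distance bounds
  have hdist1 : ∀ s ∈ Icc (0:ℝ) b.L, ∀ t ∈ Icc (0:ℝ) c.L,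
      Real.exp (-‖b.γ s - c.γ t‖^2/σx^2) ≤ Real.exp (-r₀^2/(4*σx^2))
        + Real.exp (-(b.L - s)^2/(4*σx^2)) * Real.exp (-(t:ℝ)^2/(4*σx^2)) := by
    intro s hs t ht
    have hd := hcorner s hs t ht
    rcases le_total ((b.L - s) + t) r₀ with h | h
    · rw [min_eq_left h] at hd
      have hA : 0 ≤ b.L - s := by linarith [hs.2]
      have hB : 0 ≤ t := ht.1
      have key : Real.exp (-‖b.γ s - c.γ t‖^2/σx^2)
          ≤ Real.exp (-(b.L-s)^2/(4*σx^2) + -(t:ℝ)^2/(4*σx^2)) := by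
        apply Real.exp_le_exp.2
        have h4 : (b.L-s)^2 + t^2 ≤ 4*‖b.γ s - c.γ t‖^2 := by
          nlinarith [mul_le_mul hd hd (by positivity) (norm_nonneg (b.γ s - c.γ t)),
            mul_nonneg hA hB]
        rw [show -(b.L-s)^2/(4*σx^2) + -(t:ℝ)^2/(4*σx^2)
          = -(((b.L-s)^2 + t^2)/(4*σx^2)) by ring]
        rw [neg_div, neg_le_neg_iff, div_le_div_iff₀ (by positivity) (by positivity)]
        nlinarith [h4, sq_nonneg σx]
      refine key.trans ?_
      rw [Real.exp_add]
      exact le_add_of_nonneg_left (Real.exp_pos _).le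
    · rw [min_eq_right h] at hd
      have key : Real.exp (-‖b.γ s - c.γ t‖^2/σx^2) ≤ Real.exp (-r₀^2/(4*σx^2)) := by
        apply Real.exp_le_exp.2
        rw [neg_div, neg_div, neg_le_neg_iff, div_le_div_iff₀ (by positivity) (by positivity)]
        nlinarith [mul_le_mul hd hd (by positivity) (norm_nonneg (b.γ s - c.γ t)),
          mul_pos hσ hσ, hr₀]
      exact key.trans (le_add_of_nonneg_right
        (mul_nonneg (Real.exp_pos _).le (Real.exp_pos _).le))
  have hdist2 : ∀ s ∈ Icc (0:ℝ) c.L, ∀ t ∈ Icc (0:ℝ) b.L,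
      Real.exp (-‖c.γ s - b.γ t‖^2/σx^2) ≤ Real.exp (-r₀^2/(4*σx^2))
        + Real.exp (-(s:ℝ)^2/(4*σx^2)) * Real.exp (-(b.L - t)^2/(4*σx^2)) := by
    intro s hs t ht
    have h := hdist1 t ht s hs
    calc Real.exp (-‖c.γ s - b.γ t‖^2/σx^2)
        = Real.exp (-‖b.γ t - c.γ s‖^2/σx^2) := by rw [norm_sub_rev]
      _ ≤ Real.exp (-r₀^2/(4*σx^2))
          + Real.exp (-(b.L - t)^2/(4*σx^2)) * Real.exp (-(s:ℝ)^2/(4*σx^2)) := h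
      _ = Real.exp (-r₀^2/(4*σx^2))
          + Real.exp (-(s:ℝ)^2/(4*σx^2)) * Real.exp (-(b.L - t)^2/(4*σx^2)) := by ring
  -- Gaussian integral bounds
  have hshift : (∫ s in (0:ℝ)..b.L, Real.exp (-(b.L - s)^2/(4*σx^2)))
      = ∫ u in (0:ℝ)..b.L, Real.exp (-(u:ℝ)^2/(4*σx^2)) := by
    have h := intervalIntegral.integral_comp_sub_left (a := (0:ℝ)) (b := b.L)
      (fun u => Real.exp (-(u:ℝ)^2/(4*σx^2))) b.L
    simpa using h
  have hIb : (∫ s in (0:ℝ)..b.L, Real.exp (-(b.L - s)^2/(4*σx^2))) ≤ 2*σx := by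
    rw [hshift]; exact gauss_tail hσ b.L_pos.le
  have hIc : (∫ t in (0:ℝ)..c.L, Real.exp (-(t:ℝ)^2/(4*σx^2))) ≤ 2*σx :=
    gauss_tail hσ c.L_pos.le
  -- cross-term bounds
  set C₁ := (∫ s in (0:ℝ)..b.L, ∫ t in (0:ℝ)..c.L, ker σx σt b.γ b.γ' c.γ c.γ' s t)
    with hC₁def
  set C₂ := (∫ s in (0:ℝ)..c.L, ∫ t in (0:ℝ)..b.L, ker σx σt c.γ c.γ' b.γ b.γ' s t)
    with hC₂def
  have hC₁ : C₁ ≤ b.L * c.L * Real.exp (-r₀^2/(4*σx^2)) + 4*σx^2 := by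
    rw [hC₁def]
    exact cross_bound hσ b.L_pos.le c.L_pos.le (contOn_curve b) b.contDeriv
      (contOn_curve c) c.contDeriv (u := fun s => b.L - s) (v := fun t => t)
      (continuous_const.sub continuous_id) continuous_id hdist1 hIb hIc
  have hC₂ : C₂ ≤ c.L * b.L * Real.exp (-r₀^2/(4*σx^2)) + 4*σx^2 := by
    rw [hC₂def]
    exact cross_bound hσ c.L_pos.le b.L_pos.le (contOn_curve c) c.contDeriv
      (contOn_curve b) b.contDeriv (u := fun s => s) (v := fun t => b.L - t)
      continuous_id (continuous_const.sub continuous_id) hdist2 hIc hIb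
  have hE₀ : Real.exp (-r₀^2/(4*σx^2)) ≤ 4*σx^2/r₀^2 := by
    have h := exp_neg_le_inv (y := r₀^2/(4*σx^2)) (by positivity)
    rw [show -r₀^2/(4*σx^2) = -(r₀^2/(4*σx^2)) by ring]
    refine h.trans ?_
    rw [one_div_div]
  -- nonnegativity
  have hC₁0 : 0 ≤ C₁ := by
    rw [hC₁def]
    apply intervalIntegral.integral_nonneg b.L_pos.le
    intro s _
    exact intervalIntegral.integral_nonneg c.L_pos.le
      (fun t _ => ker_nonneg _ _ _ _ _ _ _ _)
  have hC₂0 : 0 ≤ C₂ := by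
    rw [hC₂def]
    apply intervalIntegral.integral_nonneg c.L_pos.le
    intro s _
    exact intervalIntegral.integral_nonneg b.L_pos.le
      (fun t _ => ker_nonneg _ _ _ _ _ _ _ _)
  have hVcc0 : 0 ≤ V σx σt c c := by
    rw [show V σx σt c c = ∫ s in (0:ℝ)..c.L, ∫ t in (0:ℝ)..c.L,
      ker σx σt c.γ c.γ' c.γ c.γ' s t from rfl]
    apply intervalIntegral.integral_nonneg c.L_pos.le
    intro s _
    exact intervalIntegral.integral_nonneg c.L_pos.le
      (fun t _ => ker_nonneg _ _ _ _ _ _ _ _)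
  have hVbb := V_self_lower b hσ hσb hk₁ hσt1 hK0.le hlipb
  -- combine
  have hdec := vconcat_decomp b c hconsec_pt hconsec_dir σx σt
  rw [hdec, show V σx σt b b + V σx σt c c + C₁ + C₂ - V σx σt b b - V σx σt c c
    = C₁ + C₂ by ring, abs_of_nonneg (by linarith : (0:ℝ) ≤ C₁ + C₂)]
  have hm : b.L * c.L * Real.exp (-r₀^2/(4*σx^2)) ≤ b.L * c.L * (4*σx^2/r₀^2) :=
    mul_le_mul_of_nonneg_left hE₀ (mul_pos b.L_pos c.L_pos).le
  have hCs_eq : 2*(b.L*c.L*(4*σx^2/r₀^2) + 4*σx^2) = 2*Cs*σx^2 := by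
    rw [hCsdef]
    field_simp
  have hb1 : C₁ + C₂ ≤ 2*Cs*σx^2 := by
    rw [← hCs_eq]
    have : c.L * b.L * Real.exp (-r₀^2/(4*σx^2))
        = b.L * c.L * Real.exp (-r₀^2/(4*σx^2)) := by ring
    linarith [hC₁, hC₂, hm, this]
  have hb2 : 2*Cs*σx^2 ≤ ε * (c₀*(b.L/2)*σx) := by
    calc 2*Cs*σx^2 = (2*Cs*σx)*σx := by ring
      _ ≤ (2*Cs*σx)*(ε*c₀*b.L/(4*Cs)) := by
          apply mul_le_mul_of_nonneg_left hσε
          positivity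
      _ = ε*(c₀*(b.L/2)*σx) := by
          field_simp
          ring
  have hb3 : ε * (c₀*(b.L/2)*σx) ≤ ε * (V σx σt b b + V σx σt c c) := by
    apply mul_le_mul_of_nonneg_left _ hε.le
    calc c₀*(b.L/2)*σx ≤ V σx σt b b := hVbb
      _ ≤ V σx σt b b + V σx σt c c := by linarith
  linarith
end

section
/- Let γ₁ : [0,L₁] → ℝ^d and γ₂ : [0,L₂] → ℝ^d be consecutive unit-speed curves satisfying Assumption 1. Then for all σ_x, σ_t > 0 and every ε ∈ (0, min(L₁,L₂)), V(γ₁,γ₂) ≤ ε² + L₂·ε·exp(−‖γ₂(0)−γ₂(ε)‖²/σ_x²) + L₁·ε·exp(−‖γ₁(L₁−ε)−γ₁(L₁)‖²/σ_x²) + L₁·L₂·exp(−‖γ₁(L₁−ε)−γ₂(ε)‖²/σ_x²). -/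
open Set MeasureTheory

set_option maxHeartbeats 1000000 in
/-- **Upper bound on the cross inner product of consecutive curves.** For consecutive
unit-speed curves `γ₁, γ₂` satisfying Assumption 1, and every `ε ∈ (0, min(L₁,L₂))`,
`V(γ₁,γ₂) ≤ ε² + L₂·ε·exp(−‖γ₂(0)−γ₂(ε)‖²/σx²) + L₁·ε·exp(−‖γ₁(L₁−ε)−γ₁(L₁)‖²/σx²)
+ L₁·L₂·exp(−‖γ₁(L₁−ε)−γ₂(ε)‖²/σx²)`. -/
theorem consecutive_vprod_upper_bound {d : ℕ} (c₁ c₂ : UnitSpeedCurve d)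
    (hconsec_pt : c₁.γ c₁.L = c₂.γ 0)
    (hconsec_dir : c₁.γ' c₁.L = c₂.γ' 0)
    (hA1 : ∀ s ∈ Set.Icc (0:ℝ) c₁.L, ∀ s' ∈ Set.Icc (0:ℝ) c₁.L,
      ∀ t ∈ Set.Icc (0:ℝ) c₂.L, ∀ t' ∈ Set.Icc (0:ℝ) c₂.L,
      (c₁.L - s) + t ≤ (c₁.L - s') + t' → ‖c₁.γ s - c₂.γ t‖ ≤ ‖c₁.γ s' - c₂.γ t'‖) :
    ∀ σx > (0:ℝ), ∀ σt > (0:ℝ), ∀ ε : ℝ, 0 < ε → ε < min c₁.L c₂.L →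
      V σx σt c₁ c₂ ≤
        ε ^ 2 + c₂.L * ε * Real.exp (-‖c₂.γ 0 - c₂.γ ε‖ ^ 2 / σx ^ 2)
          + c₁.L * ε * Real.exp (-‖c₁.γ (c₁.L - ε) - c₁.γ c₁.L‖ ^ 2 / σx ^ 2)
          + c₁.L * c₂.L * Real.exp (-‖c₁.γ (c₁.L - ε) - c₂.γ ε‖ ^ 2 / σx ^ 2) := by
  intro σx hσx σt hσt ε hε hεm
  rw [lt_min_iff] at hεm
  obtain ⟨hε₁, hε₂⟩ := hεm
  set L₁ := c₁.L with hL₁def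
  set L₂ := c₂.L with hL₂def
  have hL₁ : 0 < L₁ := c₁.L_pos
  have hL₂ : 0 < L₂ := c₂.L_pos
  -- integrand
  set g : ℝ → ℝ → ℝ := fun s t =>
    Real.exp (-‖c₁.γ s - c₂.γ t‖ ^ 2 / σx ^ 2) *
      Real.exp (-‖c₁.γ' s - c₂.γ' t‖ ^ 2 / σt ^ 2) with hgdef
  set F : ℝ → ℝ := fun s => ∫ t in (0:ℝ)..L₂, g s t with hFdef
  have hVF : V σx σt c₁ c₂ = ∫ s in (0:ℝ)..L₁, F s := rfl
  -- constants
  set e₁ := Real.exp (-‖c₂.γ 0 - c₂.γ ε‖ ^ 2 / σx ^ 2) with he₁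
  set e₂ := Real.exp (-‖c₁.γ (L₁ - ε) - c₁.γ L₁‖ ^ 2 / σx ^ 2) with he₂
  set e₃ := Real.exp (-‖c₁.γ (L₁ - ε) - c₂.γ ε‖ ^ 2 / σx ^ 2) with he₃
  have he₁0 : 0 < e₁ := Real.exp_pos _
  have he₂0 : 0 < e₂ := Real.exp_pos _
  have he₃0 : 0 < e₃ := Real.exp_pos _
  -- basic pointwise bounds
  have hg_nonneg : ∀ s t, 0 ≤ g s t := fun s t =>
    mul_nonneg (Real.exp_pos _).le (Real.exp_pos _).le
  have hexp_le_one : ∀ x : EuclideanSpace ℝ (Fin d), ∀ σ : ℝ,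
      Real.exp (-‖x‖ ^ 2 / σ ^ 2) ≤ 1 := by
    intro x σ
    apply Real.exp_le_one_iff.mpr
    exact div_nonpos_of_nonpos_of_nonneg (neg_nonpos.mpr (by positivity)) (by positivity)
  have hg_le_one : ∀ s t, g s t ≤ 1 := by
    intro s t
    have h1 := hexp_le_one (c₁.γ s - c₂.γ t) σx
    have h2 := hexp_le_one (c₁.γ' s - c₂.γ' t) σt
    have h3 := Real.exp_nonneg (-‖c₁.γ s - c₂.γ t‖ ^ 2 / σx ^ 2)
    simp only [hgdef]
    nlinarith
  have hkey : ∀ (s t : ℝ) (C : ℝ), 0 ≤ C → C ≤ ‖c₁.γ s - c₂.γ t‖ →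
      g s t ≤ Real.exp (-C ^ 2 / σx ^ 2) := by
    intro s t C hC0 hC
    have h1 : g s t ≤ Real.exp (-‖c₁.γ s - c₂.γ t‖ ^ 2 / σx ^ 2) := by
      calc g s t ≤ Real.exp (-‖c₁.γ s - c₂.γ t‖ ^ 2 / σx ^ 2) * 1 :=
        mul_le_mul_of_nonneg_left (hexp_le_one _ _) (Real.exp_pos _).le
      _ = _ := mul_one _
    refine h1.trans (Real.exp_le_exp.mpr ?_)
    have h2 : C ^ 2 ≤ ‖c₁.γ s - c₂.γ t‖ ^ 2 := by nlinarith
    rw [div_le_div_iff₀ (by positivity) (by positivity)]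
    nlinarith [sq_nonneg σx, hσx]
  -- continuity of the curves
  have hγ₁c : ContinuousOn c₁.γ (Icc 0 L₁) := fun x hx =>
    (c₁.hasDeriv x hx).continuousWithinAt
  have hγ₂c : ContinuousOn c₂.γ (Icc 0 L₂) := fun x hx =>
    (c₂.hasDeriv x hx).continuousWithinAt
  -- inner integrability
  have hIg : ∀ s, IntervalIntegrable (g s) volume 0 L₂ := by
    intro s
    apply ContinuousOn.intervalIntegrable
    rw [uIcc_of_le hL₂.le]
    apply ContinuousOn.mul
    · exact (Real.continuous_exp.comp_continuousOn
        (((continuousOn_const.sub hγ₂c).norm.pow 2).neg.div_const _))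
    · exact (Real.continuous_exp.comp_continuousOn
        (((continuousOn_const.sub c₂.contDeriv).norm.pow 2).neg.div_const _))
  have hsub1 : uIcc (0:ℝ) ε ⊆ uIcc (0:ℝ) L₂ := by
    rw [uIcc_of_le hε.le, uIcc_of_le hL₂.le]
    exact Icc_subset_Icc le_rfl hε₂.le
  have hsub2 : uIcc ε L₂ ⊆ uIcc (0:ℝ) L₂ := by
    rw [uIcc_of_le hε₂.le, uIcc_of_le hL₂.le]
    exact Icc_subset_Icc hε.le le_rfl
  -- F bounds
  have hFsplit : ∀ s, F s = (∫ t in (0:ℝ)..ε, g s t) + ∫ t in ε..L₂, g s t := by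
    intro s
    exact (intervalIntegral.integral_add_adjacent_intervals
      ((hIg s).mono_set hsub1) ((hIg s).mono_set hsub2)).symm
  have hconst_int : ∀ (a b c : ℝ), IntervalIntegrable (fun _ : ℝ => c) volume a b :=
    fun a b c => intervalIntegrable_const
  -- bound for s in the early region [0, L₁ - ε]
  have hF₂ : ∀ s ∈ Icc (0:ℝ) (L₁ - ε), F s ≤ ε * e₂ + (L₂ - ε) * e₃ := by
    intro s hs
    have hsmem : s ∈ Icc (0:ℝ) L₁ := ⟨hs.1, hs.2.trans (by linarith)⟩
    have hLεmem : L₁ - ε ∈ Icc (0:ℝ) L₁ := ⟨by linarith, by linarith⟩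
    rw [hFsplit s]
    have b1 : (∫ t in (0:ℝ)..ε, g s t) ≤ ∫ t in (0:ℝ)..ε, e₂ := by
      apply intervalIntegral.integral_mono_on hε.le ((hIg s).mono_set hsub1)
        (hconst_int _ _ _)
      intro t ht
      have htmem : t ∈ Icc (0:ℝ) L₂ := ⟨ht.1, ht.2.trans hε₂.le⟩
      refine hkey s t _ (norm_nonneg _) ?_
      rw [hconsec_pt]
      exact hA1 (L₁ - ε) hLεmem s hsmem 0 ⟨le_rfl, hL₂.le⟩ t htmem
        (by have := ht.1; have := hs.2; linarith)
    have b2 : (∫ t in ε..L₂, g s t) ≤ ∫ t in ε..L₂, e₃ := by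
      apply intervalIntegral.integral_mono_on hε₂.le ((hIg s).mono_set hsub2)
        (hconst_int _ _ _)
      intro t ht
      have htmem : t ∈ Icc (0:ℝ) L₂ := ⟨hε.le.trans ht.1, ht.2⟩
      refine hkey s t _ (norm_nonneg _) ?_
      exact hA1 (L₁ - ε) hLεmem s hsmem ε ⟨hε.le, hε₂.le⟩ t htmem
        (by have := ht.1; have := hs.2; linarith)
    have c1 : (∫ _ in (0:ℝ)..ε, e₂) = ε * e₂ := by
      simp [intervalIntegral.integral_const, smul_eq_mul]
    have c2 : (∫ _ in ε..L₂, e₃) = (L₂ - ε) * e₃ := by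
      simp [intervalIntegral.integral_const, smul_eq_mul]
    rw [c1] at b1; rw [c2] at b2
    linarith
  -- bound for s in the late region [L₁ - ε, L₁]
  have hF₁ : ∀ s ∈ Icc (L₁ - ε) L₁, F s ≤ ε * 1 + (L₂ - ε) * e₁ := by
    intro s hs
    have hsmem : s ∈ Icc (0:ℝ) L₁ := ⟨by have := hs.1; linarith, hs.2⟩
    rw [hFsplit s]
    have b1 : (∫ t in (0:ℝ)..ε, g s t) ≤ ∫ t in (0:ℝ)..ε, (1:ℝ) := by
      apply intervalIntegral.integral_mono_on hε.le ((hIg s).mono_set hsub1)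
        (hconst_int _ _ _)
      intro t _
      exact hg_le_one s t
    have b2 : (∫ t in ε..L₂, g s t) ≤ ∫ t in ε..L₂, e₁ := by
      apply intervalIntegral.integral_mono_on hε₂.le ((hIg s).mono_set hsub2)
        (hconst_int _ _ _)
      intro t ht
      have htmem : t ∈ Icc (0:ℝ) L₂ := ⟨hε.le.trans ht.1, ht.2⟩
      refine hkey s t _ (norm_nonneg _) ?_
      rw [← hconsec_pt]
      exact hA1 L₁ ⟨hL₁.le, le_rfl⟩ s hsmem ε ⟨hε.le, hε₂.le⟩ t htmem
        (by have := ht.1; have := hs.2; linarith)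
    have c1 : (∫ _ in (0:ℝ)..ε, (1:ℝ)) = ε * 1 := by
      simp [intervalIntegral.integral_const, smul_eq_mul]
    have c2 : (∫ _ in ε..L₂, e₁) = (L₂ - ε) * e₁ := by
      simp [intervalIntegral.integral_const, smul_eq_mul]
    rw [c1] at b1; rw [c2] at b2
    linarith
  -- outer integral
  rw [hVF]
  by_cases hFI : IntervalIntegrable F volume 0 L₁
  · have hsubA : uIcc (0:ℝ) (L₁ - ε) ⊆ uIcc (0:ℝ) L₁ := by
      rw [uIcc_of_le (by linarith : (0:ℝ) ≤ L₁ - ε), uIcc_of_le hL₁.le]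
      exact Icc_subset_Icc le_rfl (by linarith)
    have hsubB : uIcc (L₁ - ε) L₁ ⊆ uIcc (0:ℝ) L₁ := by
      rw [uIcc_of_le (by linarith : L₁ - ε ≤ L₁), uIcc_of_le hL₁.le]
      exact Icc_subset_Icc (by linarith) le_rfl
    have hsplit : (∫ s in (0:ℝ)..L₁, F s)
        = (∫ s in (0:ℝ)..(L₁ - ε), F s) + ∫ s in (L₁ - ε)..L₁, F s :=
      (intervalIntegral.integral_add_adjacent_intervals
        (hFI.mono_set hsubA) (hFI.mono_set hsubB)).symm
    have d1 : (∫ s in (0:ℝ)..(L₁ - ε), F s)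
        ≤ ∫ _ in (0:ℝ)..(L₁ - ε), (ε * e₂ + (L₂ - ε) * e₃) :=
      intervalIntegral.integral_mono_on (by linarith) (hFI.mono_set hsubA)
        (hconst_int _ _ _) hF₂
    have d2 : (∫ s in (L₁ - ε)..L₁, F s)
        ≤ ∫ _ in (L₁ - ε)..L₁, (ε * 1 + (L₂ - ε) * e₁) :=
      intervalIntegral.integral_mono_on (by linarith) (hFI.mono_set hsubB)
        (hconst_int _ _ _) hF₁
    have c1 : (∫ _ in (0:ℝ)..(L₁ - ε), (ε * e₂ + (L₂ - ε) * e₃))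
        = (L₁ - ε) * (ε * e₂ + (L₂ - ε) * e₃) := by
      rw [intervalIntegral.integral_const, smul_eq_mul]
      ring
    have c2 : (∫ _ in (L₁ - ε)..L₁, (ε * 1 + (L₂ - ε) * e₁))
        = ε * (ε * 1 + (L₂ - ε) * e₁) := by
      rw [intervalIntegral.integral_const, smul_eq_mul]
      ring
    rw [c1] at d1; rw [c2] at d2
    rw [hsplit]
    have a1 : (L₁ - ε) * ε ≤ L₁ * ε := by nlinarith [sq_nonneg ε]
    have a2 : (L₁ - ε) * (L₂ - ε) ≤ L₁ * L₂ := by nlinarith [mul_pos hε hε, hε₁, hε₂, mul_pos hε hL₂]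
    have a3 : ε * (L₂ - ε) ≤ L₂ * ε := by nlinarith [sq_nonneg ε]
    have k1 : (L₁ - ε) * ε * e₂ ≤ L₁ * ε * e₂ :=
      mul_le_mul_of_nonneg_right a1 he₂0.le
    have k2 : (L₁ - ε) * (L₂ - ε) * e₃ ≤ L₁ * L₂ * e₃ :=
      mul_le_mul_of_nonneg_right a2 he₃0.le
    have k3 : ε * (L₂ - ε) * e₁ ≤ L₂ * ε * e₁ :=
      mul_le_mul_of_nonneg_right a3 he₁0.le
    calc (∫ s in (0:ℝ)..(L₁ - ε), F s) + ∫ s in (L₁ - ε)..L₁, F s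
        ≤ (L₁ - ε) * (ε * e₂ + (L₂ - ε) * e₃) + ε * (ε * 1 + (L₂ - ε) * e₁) := by
          linarith
      _ = (L₁ - ε) * ε * e₂ + (L₁ - ε) * (L₂ - ε) * e₃ + ε ^ 2
            + ε * (L₂ - ε) * e₁ := by ring
      _ ≤ L₁ * ε * e₂ + L₁ * L₂ * e₃ + ε ^ 2 + L₂ * ε * e₁ := by linarith
      _ = ε ^ 2 + L₂ * ε * e₁ + L₁ * ε * e₂ + L₁ * L₂ * e₃ := by ring
  · rw [intervalIntegral.integral_undef hFI]
    have k1 : 0 ≤ L₁ * ε * e₂ := mul_nonneg (mul_nonneg hL₁.le hε.le) he₂0.le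
    have k2 : 0 ≤ L₁ * L₂ * e₃ := mul_nonneg (mul_nonneg hL₁.le hL₂.le) he₃0.le
    have k3 : 0 ≤ L₂ * ε * e₁ := mul_nonneg (mul_nonneg hL₂.le hε.le) he₁0.le
    have k4 : 0 ≤ ε ^ 2 := sq_nonneg ε
    linarith
end

section
/- Let γ₁ : [0,L₁] → ℝ^d and γ₂ : [0,L₂] → ℝ^d be branching unit-speed curves satisfying Assumption 2. Then for all σ_x, σ_t > 0 and every ε ∈ (0, min(L₁,L₂)), V(γ₁,γ₂) ≤ ε² + L₂·ε·exp(−‖γ₁'(0)−γ₂'(ε)‖²/σ_t²) + L₁·ε·exp(−‖γ₁'(ε)−γ₂'(0)‖²/σ_t²) + L₁·L₂·exp(−‖γ₁'(ε)−γ₂'(ε)‖²/σ_t²). -/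
open Set MeasureTheory

private lemma integral_le_const_aux {f : ℝ → ℝ} {a b C : ℝ} (hab : a ≤ b)
    (hf : IntervalIntegrable f volume a b)
    (h : ∀ x ∈ Set.Icc a b, f x ≤ C) :
    ∫ x in a..b, f x ≤ (b - a) * C := by
  calc ∫ x in a..b, f x ≤ ∫ _ in a..b, C :=
        intervalIntegral.integral_mono_on hab hf intervalIntegrable_const h
    _ = (b - a) * C := by simp [smul_eq_mul]

private lemma exp_factor_le_aux {d : ℕ} (σx σt : ℝ) (hσt : 0 < σt)
    (x y u v : EuclideanSpace ℝ (Fin d)) (A : ℝ) (hA : 0 ≤ A) (h : A ≤ ‖u - v‖) :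
    Real.exp (-‖x - y‖ ^ 2 / σx ^ 2) * Real.exp (-‖u - v‖ ^ 2 / σt ^ 2)
      ≤ Real.exp (-A ^ 2 / σt ^ 2) := by
  have h1 : Real.exp (-‖x - y‖ ^ 2 / σx ^ 2) ≤ 1 := by
    apply Real.exp_le_one_iff.mpr
    exact div_nonpos_of_nonpos_of_nonneg (neg_nonpos.mpr (by positivity)) (by positivity)
  have h2 : Real.exp (-‖u - v‖ ^ 2 / σt ^ 2) ≤ Real.exp (-A ^ 2 / σt ^ 2) := by
    apply Real.exp_le_exp.mpr
    apply div_le_div_of_nonneg_right ?_ (by positivity) |>.trans_eq rfl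
    · nlinarith [norm_nonneg (u - v)]
  calc _ ≤ 1 * Real.exp (-A ^ 2 / σt ^ 2) :=
        mul_le_mul h1 h2 (Real.exp_nonneg _) zero_le_one
    _ = _ := one_mul _

/-- **Upper bound on the cross inner product of branching curves.** For branching
unit-speed curves `γ₁, γ₂` satisfying Assumption 2, and every `ε ∈ (0, min(L₁,L₂))`,
`V(γ₁,γ₂) ≤ ε² + L₂·ε·exp(−‖γ₁'(0)−γ₂'(ε)‖²/σt²) + L₁·ε·exp(−‖γ₁'(ε)−γ₂'(0)‖²/σt²)
+ L₁·L₂·exp(−‖γ₁'(ε)−γ₂'(ε)‖²/σt²)`. -/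
theorem branching_vprod_upper_bound {d : ℕ} (c₁ c₂ : UnitSpeedCurve d)
    (hbranch_pt : c₁.γ 0 = c₂.γ 0)
    (hbranch_dir : c₁.γ' 0 = c₂.γ' 0)
    (hA2 : ∀ s ∈ Set.Icc (0:ℝ) c₁.L, ∀ s' ∈ Set.Icc (0:ℝ) c₁.L,
      ∀ t ∈ Set.Icc (0:ℝ) c₂.L, ∀ t' ∈ Set.Icc (0:ℝ) c₂.L,
      s + t ≤ s' + t' → ‖c₁.γ' s - c₂.γ' t‖ ≤ ‖c₁.γ' s' - c₂.γ' t'‖) :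
    ∀ σx > (0:ℝ), ∀ σt > (0:ℝ), ∀ ε : ℝ, 0 < ε → ε < min c₁.L c₂.L →
      V σx σt c₁ c₂ ≤
        ε ^ 2 + c₂.L * ε * Real.exp (-‖c₁.γ' 0 - c₂.γ' ε‖ ^ 2 / σt ^ 2)
          + c₁.L * ε * Real.exp (-‖c₁.γ' ε - c₂.γ' 0‖ ^ 2 / σt ^ 2)
          + c₁.L * c₂.L * Real.exp (-‖c₁.γ' ε - c₂.γ' ε‖ ^ 2 / σt ^ 2) := by
  intro σx hσx σt hσt ε hε hεL
  obtain ⟨hεL₁, hεL₂⟩ := lt_min_iff.mp hεL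
  have hL₁ : (0:ℝ) < c₁.L := c₁.L_pos
  have hL₂ : (0:ℝ) < c₂.L := c₂.L_pos
  set A1 := Real.exp (-‖c₁.γ' 0 - c₂.γ' ε‖ ^ 2 / σt ^ 2) with hA1def
  set A2 := Real.exp (-‖c₁.γ' ε - c₂.γ' 0‖ ^ 2 / σt ^ 2) with hA2def
  set A3 := Real.exp (-‖c₁.γ' ε - c₂.γ' ε‖ ^ 2 / σt ^ 2) with hA3def
  set K : ℝ → ℝ → ℝ := fun s t =>
    Real.exp (-‖c₁.γ s - c₂.γ t‖ ^ 2 / σx ^ 2) *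
      Real.exp (-‖c₁.γ' s - c₂.γ' t‖ ^ 2 / σt ^ 2) with hKdef
  -- memberships
  have h0m₁ : (0:ℝ) ∈ Set.Icc (0:ℝ) c₁.L := ⟨le_refl _, hL₁.le⟩
  have h0m₂ : (0:ℝ) ∈ Set.Icc (0:ℝ) c₂.L := ⟨le_refl _, hL₂.le⟩
  have hεm₁ : ε ∈ Set.Icc (0:ℝ) c₁.L := ⟨hε.le, hεL₁.le⟩
  have hεm₂ : ε ∈ Set.Icc (0:ℝ) c₂.L := ⟨hε.le, hεL₂.le⟩
  -- continuity in t for fixed s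
  have hγ₂c : ContinuousOn c₂.γ (Set.Icc 0 c₂.L) :=
    fun t ht => (c₂.hasDeriv t ht).continuousWithinAt
  have hKcont : ∀ s, ContinuousOn (K s) (Set.Icc 0 c₂.L) := by
    intro s
    apply ContinuousOn.mul
    · exact Real.continuous_exp.comp_continuousOn
        (((continuousOn_const.sub hγ₂c).norm.pow 2).neg.div_const _)
    · exact Real.continuous_exp.comp_continuousOn
        (((continuousOn_const.sub c₂.contDeriv).norm.pow 2).neg.div_const _)
  have hKint : ∀ s, ∀ a ∈ Set.Icc (0:ℝ) c₂.L, ∀ b ∈ Set.Icc (0:ℝ) c₂.L,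
      IntervalIntegrable (K s) volume a b := fun s a ha b hb =>
    ((hKcont s).mono (Set.uIcc_subset_Icc ha hb)).intervalIntegrable
  have hKnn : ∀ s t, 0 ≤ K s t := fun s t => by positivity
  -- inner integral bounds
  set I : ℝ → ℝ := fun s => ∫ t in (0:ℝ)..c₂.L, K s t with hIdef
  have hInn : ∀ s, 0 ≤ I s := fun s =>
    intervalIntegral.integral_nonneg hL₂.le (fun t _ => hKnn s t)
  have hI1 : ∀ s ∈ Set.Icc (0:ℝ) ε, I s ≤ ε + c₂.L * A1 := by
    intro s hs
    have hsm₁ : s ∈ Set.Icc (0:ℝ) c₁.L := ⟨hs.1, hs.2.trans hεL₁.le⟩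
    have hsplit : I s = (∫ t in (0:ℝ)..ε, K s t) + ∫ t in ε..c₂.L, K s t :=
      (intervalIntegral.integral_add_adjacent_intervals
        (hKint s 0 h0m₂ ε hεm₂) (hKint s ε hεm₂ c₂.L ⟨hL₂.le, le_refl _⟩)).symm
    have hb1 : (∫ t in (0:ℝ)..ε, K s t) ≤ (ε - 0) * 1 := by
      apply integral_le_const_aux hε.le (hKint s 0 h0m₂ ε hεm₂)
      intro t ht
      have h1 : Real.exp (-‖c₁.γ s - c₂.γ t‖ ^ 2 / σx ^ 2) ≤ 1 :=
        Real.exp_le_one_iff.mpr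
          (div_nonpos_of_nonpos_of_nonneg (neg_nonpos.mpr (by positivity)) (by positivity))
      have h2 : Real.exp (-‖c₁.γ' s - c₂.γ' t‖ ^ 2 / σt ^ 2) ≤ 1 :=
        Real.exp_le_one_iff.mpr
          (div_nonpos_of_nonpos_of_nonneg (neg_nonpos.mpr (by positivity)) (by positivity))
      exact mul_le_one₀ h1 (Real.exp_nonneg _) h2
    have hb2 : (∫ t in ε..c₂.L, K s t) ≤ (c₂.L - ε) * A1 := by
      apply integral_le_const_aux hεL₂.le (hKint s ε hεm₂ c₂.L ⟨hL₂.le, le_refl _⟩)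
      intro t ht
      have htm₂ : t ∈ Set.Icc (0:ℝ) c₂.L := ⟨hε.le.trans ht.1, ht.2⟩
      exact exp_factor_le_aux σx σt hσt _ _ _ _ _ (norm_nonneg _)
        (hA2 0 h0m₁ s hsm₁ ε hεm₂ t htm₂ (by linarith [hs.1, ht.1]))
    have hA1nn : 0 ≤ A1 := Real.exp_nonneg _
    calc I s ≤ (ε - 0) * 1 + (c₂.L - ε) * A1 := by rw [hsplit]; exact add_le_add hb1 hb2
      _ ≤ ε + c₂.L * A1 := by nlinarith
  have hI2 : ∀ s ∈ Set.Icc ε c₁.L, I s ≤ ε * A2 + c₂.L * A3 := by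
    intro s hs
    have hsm₁ : s ∈ Set.Icc (0:ℝ) c₁.L := ⟨hε.le.trans hs.1, hs.2⟩
    have hsplit : I s = (∫ t in (0:ℝ)..ε, K s t) + ∫ t in ε..c₂.L, K s t :=
      (intervalIntegral.integral_add_adjacent_intervals
        (hKint s 0 h0m₂ ε hεm₂) (hKint s ε hεm₂ c₂.L ⟨hL₂.le, le_refl _⟩)).symm
    have hb1 : (∫ t in (0:ℝ)..ε, K s t) ≤ (ε - 0) * A2 := by
      apply integral_le_const_aux hε.le (hKint s 0 h0m₂ ε hεm₂)
      intro t ht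
      have htm₂ : t ∈ Set.Icc (0:ℝ) c₂.L := ⟨ht.1, ht.2.trans hεL₂.le⟩
      exact exp_factor_le_aux σx σt hσt _ _ _ _ _ (norm_nonneg _)
        (hA2 ε hεm₁ s hsm₁ 0 h0m₂ t htm₂ (by linarith [hs.1, ht.1]))
    have hb2 : (∫ t in ε..c₂.L, K s t) ≤ (c₂.L - ε) * A3 := by
      apply integral_le_const_aux hεL₂.le (hKint s ε hεm₂ c₂.L ⟨hL₂.le, le_refl _⟩)
      intro t ht
      have htm₂ : t ∈ Set.Icc (0:ℝ) c₂.L := ⟨hε.le.trans ht.1, ht.2⟩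
      exact exp_factor_le_aux σx σt hσt _ _ _ _ _ (norm_nonneg _)
        (hA2 ε hεm₁ s hsm₁ ε hεm₂ t htm₂ (by linarith [hs.1, ht.1]))
    have hA3nn : 0 ≤ A3 := Real.exp_nonneg _
    calc I s ≤ (ε - 0) * A2 + (c₂.L - ε) * A3 := by rw [hsplit]; exact add_le_add hb1 hb2
      _ ≤ ε * A2 + c₂.L * A3 := by nlinarith
  -- the piecewise-constant dominating function
  set g : ℝ → ℝ := fun s => if s ≤ ε then ε + c₂.L * A1 else ε * A2 + c₂.L * A3 with hgdef
  have hgm : Measurable g := Measurable.ite measurableSet_Iic measurable_const measurable_const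
  have hgint : IntegrableOn g (Set.Ioc 0 c₁.L) := by
    apply Integrable.mono' (g := fun _ => max |ε + c₂.L * A1| |ε * A2 + c₂.L * A3|)
      (integrableOn_const measure_Ioc_lt_top.ne)
      hgm.aestronglyMeasurable.restrict
    filter_upwards with s
    by_cases h : s ≤ ε <;> simp [hgdef, h, Real.norm_eq_abs, le_max_left, le_max_right]
  have hVeq : V σx σt c₁ c₂ = ∫ s in Set.Ioc (0:ℝ) c₁.L, I s := by
    rw [V, vprod, intervalIntegral.integral_of_le hL₁.le]
  have hVle : V σx σt c₁ c₂ ≤ ∫ s in Set.Ioc (0:ℝ) c₁.L, g s := by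
    rw [hVeq]
    apply integral_mono_of_nonneg (Filter.Eventually.of_forall fun s => hInn s) hgint
    rw [Filter.EventuallyLE, ae_restrict_iff' measurableSet_Ioc]
    apply Filter.Eventually.of_forall
    intro s hs
    by_cases h : s ≤ ε
    · simpa [hgdef, h] using hI1 s ⟨hs.1.le, h⟩
    · simpa [hgdef, h] using hI2 s ⟨(not_le.mp h).le, hs.2⟩
  have hgval : (∫ s in Set.Ioc (0:ℝ) c₁.L, g s)
      = ε * (ε + c₂.L * A1) + (c₁.L - ε) * (ε * A2 + c₂.L * A3) := by
    rw [← Set.Ioc_union_Ioc_eq_Ioc hε.le hεL₁.le,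
      setIntegral_union (Set.Ioc_disjoint_Ioc_of_le le_rfl) measurableSet_Ioc
        (hgint.mono_set (by rw [← Set.Ioc_union_Ioc_eq_Ioc hε.le hεL₁.le]; exact Set.subset_union_left))
        (hgint.mono_set (by rw [← Set.Ioc_union_Ioc_eq_Ioc hε.le hεL₁.le]; exact Set.subset_union_right))]
    have e1 : (∫ s in Set.Ioc (0:ℝ) ε, g s) = ε * (ε + c₂.L * A1) := by
      rw [setIntegral_congr_fun measurableSet_Ioc (g := fun _ => ε + c₂.L * A1)
        (fun s hs => if_pos hs.2), setIntegral_const, Real.volume_real_Ioc_of_le (by linarith), smul_eq_mul, sub_zero]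
    have e2 : (∫ s in Set.Ioc ε c₁.L, g s) = (c₁.L - ε) * (ε * A2 + c₂.L * A3) := by
      rw [setIntegral_congr_fun measurableSet_Ioc (g := fun _ => ε * A2 + c₂.L * A3)
        (fun s hs => if_neg (not_le.mpr hs.1)), setIntegral_const, Real.volume_real_Ioc_of_le (by linarith), smul_eq_mul]
    rw [e1, e2]
  rw [hgval] at hVle
  have hA1nn : 0 ≤ A1 := Real.exp_nonneg _
  have hA2nn : 0 ≤ A2 := Real.exp_nonneg _
  have hA3nn : 0 ≤ A3 := Real.exp_nonneg _
  nlinarith [mul_nonneg hε.le hA2nn, mul_nonneg hL₂.le hA3nn]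
end
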